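/- arXiv:2510.16566 — 12 statements merged into one kernel-verified Lean document; each statement's English description precedes it below -/
import Mathlib

section
/- Let I be a monomial ideal of R = K[x_1,…,x_n], let p be a monomial prime ideal of R, let t ≥ 1 be an integer, and let y_1,…,y_s be distinct variables of R such that for each i = 1,…,s there exist an integer α_i ≥ 1 and a monomial ideal J_i of R with y_i ∉ supp(J_i), I^t + (y_i^{α_i}) = J_i + (y_i^{α_i}), and p∖y_i ∉ Ass(R/J_i). Then p ∈ Ass(R/I^t) if and only if p ∈ Ass(R/(I^t : ∏_{i=1}^s y_i^{α_i})). -/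
open MvPolynomial

/-- `I` is an ideal of `K[x_1,…,x_n]` generated by monomials. -/
def IsMonomialIdeal {K : Type*} [Field K] {n : ℕ}
    (I : Ideal (MvPolynomial (Fin n) K)) : Prop :=
  ∃ S : Set (Fin n →₀ ℕ),
    I = Ideal.span ((fun e => MvPolynomial.monomial e (1 : K)) '' S)

/-- `I` is a monomial ideal admitting a monomial generating set in which no
monomial is divisible by a variable `x_i` with `i ∈ A`; equivalently, `I` is a
monomial ideal whose support is disjoint from `A`. -/
def MonomialIdealAvoiding {K : Type*} [Field K] {n : ℕ} (A : Set (Fin n))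
    (I : Ideal (MvPolynomial (Fin n) K)) : Prop :=
  ∃ S : Set (Fin n →₀ ℕ), (∀ e ∈ S, ∀ i ∈ A, e i = 0) ∧
    I = Ideal.span ((fun e => MvPolynomial.monomial e (1 : K)) '' S)

/-!
Write `p = (x_i : i ∈ T)` and let `p = L : u` be associated to `L`. For any `f`, either
`a u ≡ f b` modulo `L` for some `a ∉ p`, and then `p = L : f b` is associated to `L : f`, or
`p = (L + (f)) : u`. Take `f = y^α` with `L + (y^α) = J + (y^α)`, `J` free of `y`. In the second
case `p` is associated to the monomial ideal `J + (y^α)`, hence `p = (J + (y^α)) : m` for a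
monomial `m`; as no generator of `J` involves `y`, this forces `p ∖ y = J : m`, which is excluded.
So `p` is associated to `L : y^α`. Colon ideals of monomial ideals by monomials avoiding `y` are
again monomial and keep the hypotheses at `y`, so the variables `y_i` can be removed one at a
time. Conversely, `Ass (R / (L : g)) ⊆ Ass (R / L)` because `(L : g) : u = L : g u`.
-/

namespace Ideal

variable {A : Type*} [CommRing A]

theorem mem_colon_singleton {L : Ideal A} {x r : A} : r ∈ L.colon {x} ↔ r * x ∈ L :=
  Submodule.mem_colon_singleton

theorem colon_singleton_colon_singleton (L : Ideal A) (a b : A) :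
    (L.colon {a}).colon {b} = L.colon {a * b} := by
  ext r
  simp only [mem_colon_singleton, mul_assoc, mul_comm b a]

theorem colon_singleton_one (L : Ideal A) : L.colon {(1 : A)} = L := by
  ext r
  rw [mem_colon_singleton, mul_one]

theorem colon_bot_singleton_mk (L : Ideal A) (u : A) :
    (⊥ : Submodule A (A ⧸ L)).colon {Quotient.mk L u} = L.colon {u} := by
  ext r
  rw [Submodule.mem_colon_singleton, Submodule.mem_bot, mem_colon_singleton,
    ← Quotient.eq_zero_iff_mem, map_mul]
  rfl

theorem mem_associatedPrimes_quotient_iff [IsNoetherianRing A] {L p : Ideal A} :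
    p ∈ associatedPrimes A (A ⧸ L) ↔ p.IsPrime ∧ ∃ u : A, p = L.colon {u} := by
  rw [AssociatedPrimes.mem_iff, isAssociatedPrime_iff, Quotient.mk_surjective.exists]
  simp only [colon_bot_singleton_mk]

theorem associatedPrimes_quotient_colon_subset [IsNoetherianRing A] (L : Ideal A) (g : A) :
    associatedPrimes A (A ⧸ L.colon {g}) ⊆ associatedPrimes A (A ⧸ L) := by
  intro p hp
  obtain ⟨hprime, u, rfl⟩ := mem_associatedPrimes_quotient_iff.mp hp
  rw [colon_singleton_colon_singleton] at hprime ⊢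
  exact mem_associatedPrimes_quotient_iff.mpr ⟨hprime, g * u, rfl⟩

/-- `r f b ≡ r a u` modulo `L`, and `r a ∈ p ↔ r ∈ p` because `a ∉ p`. -/
theorem IsPrime.colon_eq_colon_mul {L p : Ideal A} (hp : p.IsPrime) {u a f b : A}
    (hpu : p = L.colon {u}) (ha : a ∉ p) (hab : a * u - f * b ∈ L) :
    p = L.colon {f * b} := by
  ext r
  have hdiff : r * (a * u) - r * (f * b) ∈ L := by
    rw [← mul_sub]; exact L.mul_mem_left r hab
  calc r ∈ p ↔ r * a ∈ p :=
        ⟨fun h => p.mul_mem_right a h, fun h => (hp.mem_or_mem h).resolve_right ha⟩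
    _ ↔ r * (a * u) ∈ L := by rw [hpu, mem_colon_singleton, mul_assoc]
    _ ↔ r * (f * b) ∈ L := ⟨fun h => by simpa using L.sub_mem h hdiff,
        fun h => by simpa using L.add_mem hdiff h⟩
    _ ↔ r ∈ L.colon {f * b} := mem_colon_singleton.symm

theorem mem_associatedPrimes_colon_or_sup [IsNoetherianRing A] {L p : Ideal A}
    (h : p ∈ associatedPrimes A (A ⧸ L)) (f : A) :
    p ∈ associatedPrimes A (A ⧸ L.colon {f}) ∨
      p ∈ associatedPrimes A (A ⧸ (L ⊔ span {f})) := by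
  obtain ⟨hp, u, hpu⟩ := mem_associatedPrimes_quotient_iff.mp h
  by_cases hle : (L ⊔ span {f}).colon {u} ≤ p
  · right
    refine mem_associatedPrimes_quotient_iff.mpr ⟨hp, u, le_antisymm ?_ hle⟩
    rw [hpu]
    exact Submodule.colon_mono le_sup_left le_rfl
  · left
    obtain ⟨a, hau, ha⟩ := SetLike.not_le_iff_exists.mp hle
    obtain ⟨l, hl, c, hc, hlc⟩ := Submodule.mem_sup.mp (mem_colon_singleton.mp hau)
    obtain ⟨b, rfl⟩ := mem_span_singleton'.mp hc
    have hab : a * u - f * b ∈ L := by rw [← hlc, mul_comm b f, add_sub_cancel_right]; exact hl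
    refine mem_associatedPrimes_quotient_iff.mpr ⟨hp, b, ?_⟩
    rw [colon_singleton_colon_singleton]
    exact hp.colon_eq_colon_mul hpu ha hab

end Ideal

namespace MvPolynomial

variable {σ R : Type*} [CommRing R]

variable (R) in
noncomputable def monomialIdeal (E : Set (σ →₀ ℕ)) : Ideal (MvPolynomial σ R) :=
  Ideal.span ((fun e => monomial e (1 : R)) '' E)

theorem mem_monomialIdeal {E : Set (σ →₀ ℕ)} {f : MvPolynomial σ R} :
    f ∈ monomialIdeal R E ↔ ∀ w ∈ f.support, ∃ e ∈ E, e ≤ w :=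
  mem_ideal_span_monomial_image

theorem monomial_mem_monomialIdeal [Nontrivial R] {E : Set (σ →₀ ℕ)} {w : σ →₀ ℕ} :
    monomial w (1 : R) ∈ monomialIdeal R E ↔ ∃ e ∈ E, e ≤ w := by
  classical
  simp [mem_monomialIdeal, support_monomial]

theorem monomialIdeal_union (E F : Set (σ →₀ ℕ)) :
    monomialIdeal R (E ∪ F) = monomialIdeal R E ⊔ monomialIdeal R F := by
  rw [monomialIdeal, Set.image_union, Ideal.span_union]
  rfl

theorem monomialIdeal_singleton (e : σ →₀ ℕ) :
    monomialIdeal R {e} = Ideal.span {monomial e (1 : R)} := by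
  rw [monomialIdeal, Set.image_singleton]

theorem monomialIdeal_sup_span_X_pow (E : Set (σ →₀ ℕ)) (y : σ) (a : ℕ) :
    monomialIdeal R E ⊔ Ideal.span {X y ^ a} = monomialIdeal R (E ∪ {Finsupp.single y a}) := by
  rw [monomialIdeal_union, monomialIdeal_singleton, X_pow_eq_monomial]

theorem span_X_image_eq_monomialIdeal (T : Set σ) :
    Ideal.span (X '' T : Set (MvPolynomial σ R)) =
      monomialIdeal R ((fun i => Finsupp.single i 1) '' T) := by
  rw [monomialIdeal, Set.image_image]
  rfl

theorem monomialIdeal_mul (E F : Set (σ →₀ ℕ)) :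
    monomialIdeal R E * monomialIdeal R F = monomialIdeal R (Set.image2 (· + ·) E F) := by
  rw [monomialIdeal, monomialIdeal, monomialIdeal, Ideal.span_mul_span', ← Set.image2_mul,
    Set.image2_image_left, Set.image2_image_right, Set.image_image2]
  congr 1
  exact Set.image2_congr fun a _ b _ => by rw [monomial_mul, one_mul]

theorem exists_monomialIdeal_eq_pow (E : Set (σ →₀ ℕ)) (t : ℕ) :
    ∃ E', monomialIdeal R E ^ t = monomialIdeal R E' := by
  induction t with
  | zero =>
    refine ⟨{0}, ?_⟩
    rw [pow_zero, monomialIdeal_singleton, ← one_def, Ideal.one_eq_top,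
      Ideal.span_singleton_one]
  | succ t ih =>
    obtain ⟨E', hE'⟩ := ih
    exact ⟨_, by rw [pow_succ, hE', monomialIdeal_mul]⟩

theorem monomialIdeal_colon_monomial (E : Set (σ →₀ ℕ)) (γ : σ →₀ ℕ) :
    (monomialIdeal R E).colon {monomial γ (1 : R)} =
      monomialIdeal R ((· - γ) '' E) := by
  ext f
  rw [Ideal.mem_colon_singleton, mem_monomialIdeal, mem_monomialIdeal]
  constructor
  · intro h w hw
    have hsupp : w + γ ∈ (f * monomial γ (1 : R)).support := by
      rwa [mem_support_iff, coeff_mul_monomial, mul_one, ← mem_support_iff]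
    obtain ⟨e, he, hle⟩ := h _ hsupp
    exact ⟨e - γ, ⟨e, he, rfl⟩, tsub_le_iff_right.mpr hle⟩
  · intro h w hw
    rw [mem_support_iff, coeff_mul_monomial'] at hw
    split_ifs at hw with hγ
    · rw [mul_one, ← mem_support_iff] at hw
      obtain ⟨_, ⟨e, he, rfl⟩, hle⟩ := h _ hw
      exact ⟨e, he, by simpa [tsub_add_cancel_of_le hγ] using tsub_le_iff_right.mp hle⟩
    · exact absurd rfl hw

/-- `P` is the kernel of the substitution `φ : x_i ↦ 0` (`i ∈ T`), as `f - φ f ∈ P` for all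
`f`. -/
theorem isPrime_span_X_image [IsDomain R] (T : Set σ) :
    (Ideal.span (X '' T : Set (MvPolynomial σ R))).IsPrime := by
  classical
  set P := Ideal.span (X '' T : Set (MvPolynomial σ R))
  let φ : MvPolynomial σ R →ₐ[R] MvPolynomial σ R :=
    aeval fun i => if i ∈ T then 0 else X i
  have hsub : ∀ f, f - φ f ∈ P := by
    intro f
    induction f using MvPolynomial.induction_on with
    | C a => simp
    | add f g hf hg => rw [map_add, add_sub_add_comm]; exact P.add_mem hf hg
    | mul_X f i hf =>
      have hX : X i - φ (X i) ∈ P := by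
        by_cases hi : i ∈ T
        · simpa [φ, hi] using (Ideal.subset_span ⟨i, hi, rfl⟩ : X i ∈ P)
        · simp [φ, hi]
      have hsplit : f * X i - φ (f * X i) = (f - φ f) * X i + φ f * (X i - φ (X i)) := by
        rw [map_mul]; ring
      rw [hsplit]
      exact P.add_mem (P.mul_mem_right _ hf) (P.mul_mem_left _ hX)
  have hker : RingHom.ker φ = P := by
    refine le_antisymm (fun f hf => by simpa [RingHom.mem_ker.mp hf] using hsub f) ?_
    rw [Ideal.span_le]
    rintro _ ⟨i, hi, rfl⟩
    simp [φ, hi]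
  rw [← hker]
  exact RingHom.ker_isPrime φ

theorem colon_le_colon_monomial_of_mem_support [Nontrivial R] {E P : Set (σ →₀ ℕ)}
    {g : MvPolynomial σ R} {w : σ →₀ ℕ}
    (h : monomialIdeal R P ≤ (monomialIdeal R E).colon {g}) (hw : w ∈ g.support) :
    monomialIdeal R P ≤ (monomialIdeal R E).colon {monomial w (1 : R)} := by
  rw [monomialIdeal, Ideal.span_le]
  rintro _ ⟨d, hd, rfl⟩
  have hdg := Ideal.mem_colon_singleton.mp (h (Ideal.subset_span ⟨d, hd, rfl⟩))
  have hdw : d + w ∈ (monomial d (1 : R) * g).support := by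
    rwa [mem_support_iff, coeff_monomial_mul, one_mul, ← mem_support_iff]
  obtain ⟨e, he, hle⟩ := mem_monomialIdeal.mp hdg _ hdw
  rw [SetLike.mem_coe, Ideal.mem_colon_singleton, monomial_mul, one_mul]
  exact monomial_mem_monomialIdeal.mpr ⟨e, he, hle⟩

theorem inf_colon_monomial_le_colon (Q : Ideal (MvPolynomial σ R)) (g : MvPolynomial σ R) :
    g.support.inf (fun w => Q.colon {monomial w (1 : R)}) ≤
      Q.colon {g} := by
  intro r hr
  rw [Ideal.mem_colon_singleton, g.as_sum, Finset.mul_sum]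
  refine Q.sum_mem fun w hw => ?_
  have hrw := Ideal.mem_colon_singleton.mp (Submodule.mem_finsetInf.mp hr w hw)
  rw [← mul_one (coeff w g), ← C_mul_monomial, mul_left_comm]
  exact Q.mul_mem_left _ hrw

/-- The prime contains every `Q : w` with `w ∈ supp g` and contains their intersection, hence
equals one of them. -/
theorem exists_monomial_colon_eq_of_isPrime [Nontrivial R] {E P : Set (σ →₀ ℕ)}
    {g : MvPolynomial σ R} (hp : (monomialIdeal R P).IsPrime)
    (h : monomialIdeal R P = (monomialIdeal R E).colon {g}) :
    ∃ w, monomialIdeal R P = (monomialIdeal R E).colon {monomial w (1 : R)} := by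
  obtain ⟨w, hw, hle⟩ := hp.inf_le'.mp ((inf_colon_monomial_le_colon _ g).trans h.ge)
  exact ⟨w, le_antisymm (colon_le_colon_monomial_of_mem_support h.le hw) hle⟩

theorem monomialIdeal_le_span_X_image_diff {E : Set (σ →₀ ℕ)} {T : Set σ} {y : σ}
    (hE : ∀ e ∈ E, e y = 0) (h : monomialIdeal R E ≤ Ideal.span (X '' T)) :
    monomialIdeal R E ≤ Ideal.span (X '' (T \ {y})) := by
  rw [monomialIdeal, Ideal.span_le]
  rintro _ ⟨e, he, rfl⟩
  have heT := mem_ideal_span_X_image.mp (h (Ideal.subset_span ⟨e, he, rfl⟩))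
  rw [SetLike.mem_coe, mem_ideal_span_X_image]
  intro m hm
  obtain ⟨i, hiT, hi⟩ := heT m hm
  obtain rfl : m = e := Finset.mem_singleton.mp (support_monomial_subset hm)
  exact ⟨i, ⟨hiT, fun hiy => hi (Set.mem_singleton_iff.mp hiy ▸ hE m he)⟩, hi⟩

theorem span_X_image_diff_eq_colon [Nontrivial R] {J : Set (σ →₀ ℕ)} {T : Set σ} {y : σ}
    {a : ℕ} {m : σ →₀ ℕ} (hJ : ∀ e ∈ J, e y = 0)
    (hp : Ideal.span (X '' T : Set (MvPolynomial σ R)) ≠ ⊤)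
    (hm : Ideal.span (X '' T) =
      (monomialIdeal R J ⊔ Ideal.span {X y ^ a}).colon {monomial m (1 : R)}) :
    Ideal.span (X '' (T \ {y})) = (monomialIdeal R J).colon {monomial m (1 : R)} := by
  rw [monomialIdeal_sup_span_X_pow] at hm
  have hym : ¬ Finsupp.single y a ≤ m := fun hle => hp <| by
    rw [hm, Ideal.eq_top_iff_one, Ideal.mem_colon_singleton, one_mul]
    exact monomial_mem_monomialIdeal.mpr ⟨_, Or.inr rfl, hle⟩
  apply le_antisymm
  · rw [Ideal.span_le]
    rintro _ ⟨x, ⟨hxT, hxy⟩, rfl⟩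
    have hx := Ideal.mem_colon_singleton.mp (hm ▸ Ideal.subset_span (Set.mem_image_of_mem X hxT))
    rw [X, monomial_mul, one_mul, monomial_mem_monomialIdeal] at hx
    rw [SetLike.mem_coe, Ideal.mem_colon_singleton, X, monomial_mul, one_mul,
      monomial_mem_monomialIdeal]
    obtain ⟨e, he | rfl, hle⟩ := hx
    · exact ⟨e, he, hle⟩
    · refine absurd (Finsupp.single_le_iff.mpr ?_) hym
      simpa [Finsupp.single_apply, Ne.symm hxy] using Finsupp.single_le_iff.mp hle
  · rw [monomialIdeal_colon_monomial]
    refine monomialIdeal_le_span_X_image_diff (by rintro _ ⟨e, he, rfl⟩; simp [hJ e he]) ?_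
    rw [← monomialIdeal_colon_monomial, hm, monomialIdeal_union]
    exact Submodule.colon_mono le_sup_left le_rfl

theorem monomialIdeal_sup_span_X_pow_colon {E : Set (σ →₀ ℕ)} {y : σ} {a : ℕ}
    {γ : σ →₀ ℕ} (hγ : γ y = 0) :
    (monomialIdeal R E ⊔ Ideal.span {X y ^ a}).colon {monomial γ (1 : R)} =
      (monomialIdeal R E).colon {monomial γ 1} ⊔ Ideal.span {X y ^ a} := by
  have hsub : Finsupp.single y a - γ = Finsupp.single y a := by
    ext i
    by_cases hi : i = y
    · simp [hi, hγ]
    · simp [Ne.symm hi]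
  rw [monomialIdeal_sup_span_X_pow, monomialIdeal_colon_monomial, monomialIdeal_colon_monomial,
    Set.image_union, Set.image_singleton, hsub, monomialIdeal_sup_span_X_pow]

section Associated

variable [IsDomain R] [IsNoetherianRing R] [Finite σ]

theorem span_X_image_diff_mem_associatedPrimes {J : Set (σ →₀ ℕ)} {T : Set σ} {y : σ}
    {a : ℕ} (hJ : ∀ e ∈ J, e y = 0)
    (h : Ideal.span (X '' T) ∈ associatedPrimes (MvPolynomial σ R)
      (MvPolynomial σ R ⧸ (monomialIdeal R J ⊔ Ideal.span {X y ^ a}))) :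
    Ideal.span (X '' (T \ {y})) ∈ associatedPrimes (MvPolynomial σ R)
      (MvPolynomial σ R ⧸ monomialIdeal R J) := by
  obtain ⟨hp, u, hu⟩ := Ideal.mem_associatedPrimes_quotient_iff.mp h
  rw [monomialIdeal_sup_span_X_pow, span_X_image_eq_monomialIdeal] at hu
  obtain ⟨m, hm⟩ :=
    exists_monomial_colon_eq_of_isPrime (by rwa [span_X_image_eq_monomialIdeal] at hp) hu
  rw [← span_X_image_eq_monomialIdeal, ← monomialIdeal_sup_span_X_pow] at hm
  exact Ideal.mem_associatedPrimes_quotient_iff.mpr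
    ⟨isPrime_span_X_image _, monomial m 1, span_X_image_diff_eq_colon hJ hp.ne_top hm⟩

theorem mem_associatedPrimes_colon_X_pow {L : Ideal (MvPolynomial σ R)} {J : Set (σ →₀ ℕ)}
    {T : Set σ} {y : σ} {a : ℕ} (hJ : ∀ e ∈ J, e y = 0)
    (hLJ : L ⊔ Ideal.span {X y ^ a} = monomialIdeal R J ⊔ Ideal.span {X y ^ a})
    (hass : Ideal.span (X '' (T \ {y})) ∉ associatedPrimes (MvPolynomial σ R)
      (MvPolynomial σ R ⧸ monomialIdeal R J))
    (h : Ideal.span (X '' T) ∈ associatedPrimes (MvPolynomial σ R) (MvPolynomial σ R ⧸ L)) :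
    Ideal.span (X '' T) ∈ associatedPrimes (MvPolynomial σ R)
      (MvPolynomial σ R ⧸ L.colon {X y ^ a}) :=
  (Ideal.mem_associatedPrimes_colon_or_sup h _).resolve_right fun h' =>
    hass (span_X_image_diff_mem_associatedPrimes hJ (hLJ ▸ h'))

theorem mem_associatedPrimes_colon_prod_X_pow {ι : Type*} {E : Set (σ →₀ ℕ)} {T : Set σ}
    {y : ι → σ} (hy : Function.Injective y) (α : ι → ℕ) {J : ι → Set (σ →₀ ℕ)}
    (hJ : ∀ i, ∀ e ∈ J i, e (y i) = 0)
    (hEJ : ∀ i, monomialIdeal R E ⊔ Ideal.span {X (y i) ^ α i} =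
      monomialIdeal R (J i) ⊔ Ideal.span {X (y i) ^ α i})
    (hass : ∀ i, Ideal.span (X '' (T \ {y i})) ∉ associatedPrimes (MvPolynomial σ R)
      (MvPolynomial σ R ⧸ monomialIdeal R (J i)))
    (h : Ideal.span (X '' T) ∈ associatedPrimes (MvPolynomial σ R)
      (MvPolynomial σ R ⧸ monomialIdeal R E))
    (F : Finset ι) :
    Ideal.span (X '' T) ∈ associatedPrimes (MvPolynomial σ R)
      (MvPolynomial σ R ⧸ (monomialIdeal R E).colon {∏ i ∈ F, X (y i) ^ α i}) := by
  classical
  induction F using Finset.induction with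
  | empty => rwa [Finset.prod_empty, Ideal.colon_singleton_one]
  | insert j F hj ih =>
    set γ := ∑ i ∈ F, Finsupp.single (y i) (α i)
    have hprod : ∏ i ∈ F, X (y i) ^ α i = monomial γ (1 : R) := by
      simp only [X_pow_eq_monomial, γ, monomial_sum_one]
    have hγ : γ (y j) = 0 := by
      simp only [γ, Finsupp.coe_finsetSum, Finset.sum_apply]
      exact Finset.sum_eq_zero fun i hi =>
        Finsupp.single_eq_of_ne fun hij => hj (hy hij ▸ hi)
    rw [hprod] at ih
    rw [Finset.prod_insert hj, mul_comm, hprod,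
      ← Ideal.colon_singleton_colon_singleton]
    refine mem_associatedPrimes_colon_X_pow (J := (· - γ) '' J j)
      (by rintro _ ⟨e, he, rfl⟩; simp [hJ j e he]) ?_ ?_ ih
    · rw [← monomialIdeal_sup_span_X_pow_colon hγ, hEJ j,
        monomialIdeal_sup_span_X_pow_colon hγ, monomialIdeal_colon_monomial]
    · rw [← monomialIdeal_colon_monomial]
      exact fun hmem => hass j (Ideal.associatedPrimes_quotient_colon_subset _ _ hmem)

end Associated

end MvPolynomial

theorem maximal_ideal_criterion_colon_iff_general
    {K : Type*} [Field K] {n s : ℕ}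
    (I : Ideal (MvPolynomial (Fin n) K)) (hI : IsMonomialIdeal I)
    (T : Set (Fin n)) (t : ℕ)
    (y : Fin s → Fin n) (hy : Function.Injective y)
    (α : Fin s → ℕ)
    (J : Fin s → Ideal (MvPolynomial (Fin n) K))
    (hJ : ∀ i, MonomialIdealAvoiding {y i} (J i))
    (hIJ : ∀ i, I ^ t + Ideal.span {(X (y i) : MvPolynomial (Fin n) K) ^ α i}
        = J i + Ideal.span {(X (y i) : MvPolynomial (Fin n) K) ^ α i})
    (hass : ∀ i,
      Ideal.span ((X : Fin n → MvPolynomial (Fin n) K) '' (T \ {y i})) ∉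
        associatedPrimes (MvPolynomial (Fin n) K)
          (MvPolynomial (Fin n) K ⧸ J i)) :
    Ideal.span ((X : Fin n → MvPolynomial (Fin n) K) '' T) ∈
        associatedPrimes (MvPolynomial (Fin n) K)
          (MvPolynomial (Fin n) K ⧸ I ^ t) ↔
      Ideal.span ((X : Fin n → MvPolynomial (Fin n) K) '' T) ∈
        associatedPrimes (MvPolynomial (Fin n) K)
          (MvPolynomial (Fin n) K ⧸
            (I ^ t).colon (Ideal.span
              {∏ i, (X (y i) : MvPolynomial (Fin n) K) ^ α i})) := by
  obtain ⟨S, hIS⟩ := hI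
  obtain ⟨E, hE⟩ := exists_monomialIdeal_eq_pow (R := K) S t
  have hIt : I ^ t = monomialIdeal K E := by rw [← hE, hIS]; rfl
  choose SJ hSJ hJS using hJ
  have hJSJ : ∀ i, J i = monomialIdeal K (SJ i) := hJS
  rw [Ideal.colon_span, hIt]
  simp only [hIt, hJSJ] at hIJ
  exact ⟨fun h => mem_associatedPrimes_colon_prod_X_pow hy α
      (fun i e he => hSJ i e he (y i) rfl) hIJ (fun i => by rw [← hJSJ i]; exact hass i) h
      Finset.univ,
    fun h => Ideal.associatedPrimes_quotient_colon_subset _ _ h⟩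

/-- Let `I` be a monomial ideal of `R = K[x_1,…,x_n]`, let
`p = (x_i : i ∈ T)` be a monomial prime ideal, `t ≥ 1`, and let `y_1,…,y_s` be
distinct variables such that for each `i` there are `α_i ≥ 1` and a monomial
ideal `J_i` with `y_i ∉ supp J_i`, `I^t + (y_i^{α_i}) = J_i + (y_i^{α_i})` and
`p ∖ y_i ∉ Ass (R / J_i)`.  Then `p ∈ Ass (R / I^t)` iff
`p ∈ Ass (R / (I^t : ∏ y_i^{α_i}))`. -/
theorem maximal_ideal_criterion_colon_iff
    {K : Type*} [Field K] {n s : ℕ}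
    (I : Ideal (MvPolynomial (Fin n) K)) (hI : IsMonomialIdeal I)
    (T : Set (Fin n)) (t : ℕ) (ht : 1 ≤ t)
    (y : Fin s → Fin n) (hy : Function.Injective y)
    (α : Fin s → ℕ) (hα : ∀ i, 1 ≤ α i)
    (J : Fin s → Ideal (MvPolynomial (Fin n) K))
    (hJ : ∀ i, MonomialIdealAvoiding {y i} (J i))
    (hIJ : ∀ i, I ^ t + Ideal.span {(X (y i) : MvPolynomial (Fin n) K) ^ α i}
        = J i + Ideal.span {(X (y i) : MvPolynomial (Fin n) K) ^ α i})
    (hass : ∀ i,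
      Ideal.span ((X : Fin n → MvPolynomial (Fin n) K) '' (T \ {y i})) ∉
        associatedPrimes (MvPolynomial (Fin n) K)
          (MvPolynomial (Fin n) K ⧸ J i)) :
    Ideal.span ((X : Fin n → MvPolynomial (Fin n) K) '' T) ∈
        associatedPrimes (MvPolynomial (Fin n) K)
          (MvPolynomial (Fin n) K ⧸ I ^ t) ↔
      Ideal.span ((X : Fin n → MvPolynomial (Fin n) K) '' T) ∈
        associatedPrimes (MvPolynomial (Fin n) K)
          (MvPolynomial (Fin n) K ⧸
            (I ^ t).colon (Ideal.span
              {∏ i, (X (y i) : MvPolynomial (Fin n) K) ^ α i})) :=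
  maximal_ideal_criterion_colon_iff_general I hI T t y hy α J hJ hIJ hass
end

section
/- Let I be a monomial ideal of R = K[x_1,…,x_n], let p be a monomial prime ideal of R, let t ≥ 1 be an integer, let α_1,…,α_s be positive integers, and let y_1,…,y_s be distinct variables of R such that p ∉ Ass(R/(I^t + (y_1^{α_1}))) and, for each i = 2,…,s, p ∉ Ass(R/((I^t : ∏_{j=1}^{i−1} y_j^{α_j}) + (y_i^{α_i}))). Then p ∈ Ass(R/I^t) if and only if p ∈ Ass(R/(I^t : ∏_{i=1}^s y_i^{α_i})). -/
/-!
Multiplication by `f` gives an exact sequence `0 → R ⧸ (I : f) → R ⧸ I → R ⧸ (I + (f))`, so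
`Ass (R ⧸ (I : f)) ⊆ Ass (R ⧸ I) ⊆ Ass (R ⧸ (I : f)) ∪ Ass (R ⧸ (I + (f)))`, and a prime outside
`Ass (R ⧸ (I + (f)))` is associated to `I` iff it is associated to `I : f`. Since
`(I : a) : b = I : ab`, applying this with `f = y_i ^ α_i` to the ideals `I ^ t : ∏_{j<i} y_j ^ α_j`
for `i = 1, …, s` in turn gives the theorem.
-/

open MvPolynomial

theorem Fin.prod_filter_lt_succ {M : Type*} [CommMonoid M] {s : ℕ} (g : Fin (s + 1) → M)
    (i : Fin s) :
    ∏ j ∈ Finset.univ.filter (· < i.succ), g j =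
      g 0 * ∏ j ∈ Finset.univ.filter (· < i), g j.succ := by
  simp only [Finset.prod_filter, Fin.prod_univ_succ, Fin.succ_pos, if_true,
    Fin.succ_lt_succ_iff]

namespace Ideal

variable {R : Type*} [CommRing R] (I : Ideal R) (f : R)

theorem colon_span_singleton_one : I.colon (span {(1 : R)}) = I := by
  ext r
  rw [mem_colon_span_singleton, mul_one]

theorem colon_span_singleton_colon_span_singleton (a b : R) :
    (I.colon (span {a})).colon (span {b}) = I.colon (span {a * b}) := by
  ext r
  simp only [mem_colon_span_singleton, mul_assoc, mul_comm a b]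

def mulQuotColon : (R ⧸ I.colon (span {f})) →ₗ[R] R ⧸ I :=
  Submodule.mapQ _ _ (LinearMap.mulRight R f) fun _ hr => mem_colon_span_singleton.mp hr

theorem mulQuotColon_mk (r : R) :
    mulQuotColon I f (Quotient.mk _ r) = Quotient.mk I (r * f) := rfl

theorem mulQuotColon_injective : Function.Injective (mulQuotColon I f) := by
  refine (injective_iff_map_eq_zero _).mpr fun x hx => ?_
  obtain ⟨r, rfl⟩ := Quotient.mk_surjective x
  rw [mulQuotColon_mk, Quotient.eq_zero_iff_mem] at hx
  exact Quotient.eq_zero_iff_mem.mpr (mem_colon_span_singleton.mpr hx)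

theorem exact_mulQuotColon_factor :
    Function.Exact (mulQuotColon I f) (Submodule.factor (le_sup_left : I ≤ I ⊔ span {f})) := by
  intro x
  obtain ⟨x, rfl⟩ := Quotient.mk_surjective x
  change Quotient.mk (I ⊔ span {f}) x = 0 ↔ _
  rw [Quotient.eq_zero_iff_mem, Submodule.mem_sup]
  constructor
  · rintro ⟨i, hi, _, hz, rfl⟩
    obtain ⟨r, rfl⟩ := mem_span_singleton'.mp hz
    refine ⟨Quotient.mk _ r, ?_⟩
    rw [mulQuotColon_mk, Quotient.eq]
    simpa using I.neg_mem hi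
  · rintro ⟨y, hy⟩
    obtain ⟨r, rfl⟩ := Quotient.mk_surjective y
    rw [mulQuotColon_mk, Quotient.eq] at hy
    exact ⟨x - r * f, by simpa using I.neg_mem hy, r * f, mem_span_singleton'.mpr ⟨r, rfl⟩,
      sub_add_cancel x _⟩

theorem associatedPrimes_quotient_colon_subset_s4 :
    associatedPrimes R (R ⧸ I.colon (span {f})) ⊆ associatedPrimes R (R ⧸ I) :=
  associatedPrimes.subset_of_injective (mulQuotColon_injective I f)

theorem associatedPrimes_quotient_subset_union :
    associatedPrimes R (R ⧸ I) ⊆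
      associatedPrimes R (R ⧸ I.colon (span {f})) ∪ associatedPrimes R (R ⧸ (I + span {f})) :=
  associatedPrimes.subset_union_of_exact (mulQuotColon_injective I f)
    (exact_mulQuotColon_factor I f)

variable {I f} {p : Ideal R}

theorem mem_associatedPrimes_quotient_colon_iff
    (hp : p ∉ associatedPrimes R (R ⧸ (I + span {f}))) :
    p ∈ associatedPrimes R (R ⧸ I.colon (span {f})) ↔ p ∈ associatedPrimes R (R ⧸ I) :=
  ⟨(associatedPrimes_quotient_colon_subset_s4 I f ·), fun h =>
    (associatedPrimes_quotient_subset_union I f h).resolve_right hp⟩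

theorem mem_associatedPrimes_quotient_colon_prod_iff {s : ℕ} (g : Fin s → R)
    (hg : ∀ i, p ∉ associatedPrimes R
      (R ⧸ (I.colon (span {∏ j ∈ Finset.univ.filter (· < i), g j}) + span {g i}))) :
    p ∈ associatedPrimes R (R ⧸ I.colon (span {∏ i, g i})) ↔ p ∈ associatedPrimes R (R ⧸ I) := by
  induction s generalizing I with
  | zero => rw [Finset.univ_eq_empty, Finset.prod_empty, colon_span_singleton_one]
  | succ s ih =>
    have hg0 : p ∉ associatedPrimes R (R ⧸ (I + span {g 0})) := by
      have h := hg 0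
      rwa [Finset.filter_false_of_mem fun j _ => Fin.not_lt_zero j, Finset.prod_empty,
        colon_span_singleton_one] at h
    have hg_succ : ∀ i : Fin s, p ∉ associatedPrimes R
        (R ⧸ ((I.colon (span {g 0})).colon (span {∏ j ∈ Finset.univ.filter (· < i), g j.succ})
          + span {g i.succ})) := by
      intro i
      rw [colon_span_singleton_colon_span_singleton, ← Fin.prod_filter_lt_succ]
      exact hg i.succ
    rw [Fin.prod_univ_succ, ← colon_span_singleton_colon_span_singleton, ih _ hg_succ,
      mem_associatedPrimes_quotient_colon_iff hg0]

end Ideal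

theorem associated_iff_colon_of_not_associated_steps_general
    {K : Type*} [Field K] {n s : ℕ}
    (I : Ideal (MvPolynomial (Fin n) K))
    (T : Set (Fin n)) (t : ℕ)
    (α : Fin s → ℕ)
    (y : Fin s → Fin n)
    (h1 : ∀ i : Fin s, (i : ℕ) = 0 →
      Ideal.span ((X : Fin n → MvPolynomial (Fin n) K) '' T) ∉
        associatedPrimes (MvPolynomial (Fin n) K)
          (MvPolynomial (Fin n) K ⧸
            (I ^ t + Ideal.span {(X (y i) : MvPolynomial (Fin n) K) ^ α i})))
    (h2 : ∀ i : Fin s, 0 < (i : ℕ) →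
      Ideal.span ((X : Fin n → MvPolynomial (Fin n) K) '' T) ∉
        associatedPrimes (MvPolynomial (Fin n) K)
          (MvPolynomial (Fin n) K ⧸
            ((I ^ t).colon (Ideal.span
                {∏ j ∈ Finset.univ.filter (fun j => j < i),
                  (X (y j) : MvPolynomial (Fin n) K) ^ α j}) +
              Ideal.span {(X (y i) : MvPolynomial (Fin n) K) ^ α i}))) :
    Ideal.span ((X : Fin n → MvPolynomial (Fin n) K) '' T) ∈
        associatedPrimes (MvPolynomial (Fin n) K)
          (MvPolynomial (Fin n) K ⧸ I ^ t) ↔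
      Ideal.span ((X : Fin n → MvPolynomial (Fin n) K) '' T) ∈
        associatedPrimes (MvPolynomial (Fin n) K)
          (MvPolynomial (Fin n) K ⧸
            (I ^ t).colon (Ideal.span
              {∏ i, (X (y i) : MvPolynomial (Fin n) K) ^ α i})) := by
  refine (Ideal.mem_associatedPrimes_quotient_colon_prod_iff _ fun i => ?_).symm
  rcases Nat.eq_zero_or_pos i with hi | hi
  · have hempty : Finset.univ.filter (· < i) = ∅ :=
      Finset.filter_false_of_mem fun j _ => by simp [Fin.lt_def, hi]
    rw [hempty, Finset.prod_empty, Ideal.colon_span_singleton_one]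
    exact h1 i hi
  · exact h2 i hi

/-- Let `I` be a monomial ideal of `R = K[x_1,…,x_n]`,
`p = (x_i : i ∈ T)` a monomial prime ideal, `t ≥ 1`, `α_1,…,α_s ≥ 1`, and
`y_1,…,y_s` distinct variables such that `p ∉ Ass (R / (I^t + (y_1^{α_1})))`
and, for `i = 2,…,s`,
`p ∉ Ass (R / ((I^t : ∏_{j<i} y_j^{α_j}) + (y_i^{α_i})))`.  Then
`p ∈ Ass (R / I^t)` iff `p ∈ Ass (R / (I^t : ∏_{i=1}^s y_i^{α_i}))`. -/
theorem associated_iff_colon_of_not_associated_steps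
    {K : Type*} [Field K] {n s : ℕ}
    (I : Ideal (MvPolynomial (Fin n) K)) (hI : IsMonomialIdeal I)
    (T : Set (Fin n)) (t : ℕ) (ht : 1 ≤ t)
    (α : Fin s → ℕ) (hα : ∀ i, 1 ≤ α i)
    (y : Fin s → Fin n) (hy : Function.Injective y)
    (h1 : ∀ i : Fin s, (i : ℕ) = 0 →
      Ideal.span ((X : Fin n → MvPolynomial (Fin n) K) '' T) ∉
        associatedPrimes (MvPolynomial (Fin n) K)
          (MvPolynomial (Fin n) K ⧸
            (I ^ t + Ideal.span {(X (y i) : MvPolynomial (Fin n) K) ^ α i})))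
    (h2 : ∀ i : Fin s, 0 < (i : ℕ) →
      Ideal.span ((X : Fin n → MvPolynomial (Fin n) K) '' T) ∉
        associatedPrimes (MvPolynomial (Fin n) K)
          (MvPolynomial (Fin n) K ⧸
            ((I ^ t).colon (Ideal.span
                {∏ j ∈ Finset.univ.filter (fun j => j < i),
                  (X (y j) : MvPolynomial (Fin n) K) ^ α j}) +
              Ideal.span {(X (y i) : MvPolynomial (Fin n) K) ^ α i}))) :
    Ideal.span ((X : Fin n → MvPolynomial (Fin n) K) '' T) ∈
        associatedPrimes (MvPolynomial (Fin n) K)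
          (MvPolynomial (Fin n) K ⧸ I ^ t) ↔
      Ideal.span ((X : Fin n → MvPolynomial (Fin n) K) '' T) ∈
        associatedPrimes (MvPolynomial (Fin n) K)
          (MvPolynomial (Fin n) K ⧸
            (I ^ t).colon (Ideal.span
              {∏ i, (X (y i) : MvPolynomial (Fin n) K) ^ α i})) :=
  associated_iff_colon_of_not_associated_steps_general I T t α y h1 h2
end

section
/- Let I be a monomial ideal of R = K[x_1,…,x_n], let p be a monomial prime ideal of R, let t ≥ 1 be an integer, let α_1,…,α_s be positive integers, and let y_1,…,y_s be distinct variables of R such that p ∉ Ass(R/(I^t + (y_1^{α_1}))) and, for each i = 2,…,s, p ∉ Ass(R/((I^t : ∏_{j=1}^{i−1} y_j^{α_j}) + (y_i^{α_i}))). If ∏_{i=1}^s y_i^{α_i} ∈ I^ℓ for some integer ℓ ≥ t, then p ∉ Ass(R/I^t). -/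
/-
An associated prime `p` of `R ⧸ J` is a colon ideal `(J : f)`. If `p ∉ Ass (R ⧸ (J + (b)))`, then
`(J + (b) : f) ≠ p`, so some `r ∉ p` has `r f = j + b h` with `j ∈ J`; as `p` is prime,
`p = (J : r f) = (J : b h)`. Applied to `(J : g)`, using `(J : g f) = ((J : g) : f)`, this turns
`p = (J : g f)` into `p = (J : g b h)`. Going through the `b i` one at a time gives
`p = (J : (∏ b i) h)`, so `∏ b i ∉ J`; for `J = I^t` this contradicts `∏ y_i^{α_i} ∈ I^ℓ ⊆ I^t`.
-/

open MvPolynomial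

namespace Ideal

variable {R : Type*} [CommRing R] {J p : Ideal R}

theorem colon_bot_singleton_mk_s5 (f : R) :
    (⊥ : Submodule R (R ⧸ J)).colon {Ideal.Quotient.mk J f} = J.colon {f} := by
  ext r
  simp only [Submodule.mem_colon_singleton, Submodule.mem_bot, Algebra.smul_def,
    Quotient.algebraMap_eq, ← map_mul, Quotient.eq_zero_iff_mem, Algebra.algebraMap_self,
    RingHom.id_apply]

theorem mem_associatedPrimes_quotient_of_colon_eq {f : R} (hp : p.IsPrime)
    (hf : J.colon {f} = p) : p ∈ associatedPrimes R (R ⧸ J) :=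
  ⟨hp, Ideal.Quotient.mk J f, by rw [colon_bot_singleton_mk_s5, hf, hp.radical]⟩

theorem exists_colon_eq_of_mem_associatedPrimes_quotient [IsNoetherianRing R]
    (hp : p ∈ associatedPrimes R (R ⧸ J)) : ∃ f : R, J.colon {f} = p := by
  obtain ⟨-, x, rfl⟩ := isAssociatedPrime_iff.mp hp
  obtain ⟨f, rfl⟩ := Ideal.Quotient.mk_surjective x
  exact ⟨f, (colon_bot_singleton_mk_s5 f).symm⟩

theorem colon_singleton_mul (g f : R) : J.colon {g * f} = (J.colon {g}).colon {f} := by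
  ext r
  simp only [Submodule.mem_colon_singleton, smul_eq_mul]
  ring_nf

theorem colon_singleton_one_s5 : J.colon {1} = J := by
  ext r
  simp

theorem colon_singleton_add_of_mem {j : R} (hj : j ∈ J) (x : R) :
    J.colon {j + x} = J.colon {x} := by
  ext r
  simp only [Submodule.mem_colon_singleton, smul_eq_mul, mul_add]
  exact J.add_mem_iff_right (J.mul_mem_left r hj)

theorem colon_singleton_mul_of_notMem {f r : R} (hp : (J.colon {f}).IsPrime)
    (hr : r ∉ J.colon {f}) : J.colon {r * f} = J.colon {f} := by
  ext x
  rw [mul_comm, colon_singleton_mul, Submodule.mem_colon_singleton, smul_eq_mul,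
    hp.mul_mem_iff_mem_or_mem.trans (or_iff_left hr)]

theorem exists_notMem_mul_mem_of_notMem_associatedPrimes {f b : R} (hp : p.IsPrime)
    (hf : J.colon {f} = p) (hb : p ∉ associatedPrimes R (R ⧸ (J + span {b}))) :
    ∃ r ∉ p, r * f ∈ J + span {b} := by
  by_contra! h
  refine hb (mem_associatedPrimes_quotient_of_colon_eq (f := f) hp (le_antisymm ?_ ?_))
  · exact fun r hr ↦ h r |>.mtr (Submodule.mem_colon_singleton.mp hr)
  · intro r hr
    rw [← hf] at hr
    exact Submodule.mem_colon_singleton.mpr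
      (Submodule.mem_sup_left (Submodule.mem_colon_singleton.mp hr))

theorem exists_colon_mul_eq_of_notMem_associatedPrimes {f b : R} (hp : p.IsPrime)
    (hf : J.colon {f} = p) (hb : p ∉ associatedPrimes R (R ⧸ (J + span {b}))) :
    ∃ h, J.colon {b * h} = p := by
  obtain ⟨r, hr, hrf⟩ := exists_notMem_mul_mem_of_notMem_associatedPrimes hp hf hb
  obtain ⟨j, hj, z, hz, hjz⟩ := Submodule.mem_sup.mp hrf
  obtain ⟨h, rfl⟩ := mem_span_singleton.mp hz
  subst hf
  refine ⟨h, ?_⟩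
  rw [← colon_singleton_add_of_mem hj, hjz, colon_singleton_mul_of_notMem hp hr]

theorem exists_colon_mul_mul_eq_of_notMem_associatedPrimes {g f b : R} (hp : p.IsPrime)
    (hf : J.colon {g * f} = p) (hb : p ∉ associatedPrimes R (R ⧸ (J.colon {g} + span {b}))) :
    ∃ h, J.colon {g * b * h} = p := by
  rw [colon_singleton_mul] at hf
  obtain ⟨h, hh⟩ := exists_colon_mul_eq_of_notMem_associatedPrimes hp hf hb
  exact ⟨h, by rwa [mul_assoc, colon_singleton_mul]⟩

open Finset in
theorem exists_colon_prod_mul_eq_of_notMem_associatedPrimes {f : R} (hp : p.IsPrime)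
    (hf : J.colon {f} = p) {s : ℕ} (b : Fin s → R)
    (hb : ∀ i, p ∉ associatedPrimes R (R ⧸ (J.colon {∏ j < i, b j} + span {b i}))) :
    ∃ h, J.colon {(∏ i, b i) * h} = p := by
  induction s with
  | zero => exact ⟨f, by simpa using hf⟩
  | succ s ih =>
    obtain ⟨g, hg⟩ := ih (fun i ↦ b i.castSucc) fun i ↦ by
      rw [← Fin.prod_Iio_castSucc]; exact hb i.castSucc
    have hlast := hb (Fin.last s)
    rw [Fin.Iio_last_eq_map, prod_map] at hlast
    obtain ⟨h, hh⟩ := exists_colon_mul_mul_eq_of_notMem_associatedPrimes hp hg hlast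
    exact ⟨h, by rwa [Fin.prod_univ_castSucc]⟩

open Finset in
theorem prod_notMem_of_mem_associatedPrimes [IsNoetherianRing R]
    (hp : p ∈ associatedPrimes R (R ⧸ J)) {s : ℕ} (b : Fin s → R)
    (hb : ∀ i, p ∉ associatedPrimes R (R ⧸ (J.colon {∏ j < i, b j} + span {b i}))) :
    ∏ i, b i ∉ J := by
  obtain ⟨f, hf⟩ := exists_colon_eq_of_mem_associatedPrimes_quotient hp
  obtain ⟨h, hh⟩ := exists_colon_prod_mul_eq_of_notMem_associatedPrimes hp.isPrime hf b hb
  intro hmem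
  refine hp.isPrime.ne_top (hh ▸ ?_)
  rw [Submodule.colon_eq_top_iff_subset, Set.singleton_subset_iff]
  exact J.mul_mem_right h hmem

end Ideal

theorem not_associated_of_steps_and_prod_mem_pow_general
    {K : Type*} [Field K] {n s : ℕ}
    (I : Ideal (MvPolynomial (Fin n) K))
    (T : Set (Fin n)) (t : ℕ)
    (α : Fin s → ℕ)
    (y : Fin s → Fin n)
    (h1 : ∀ i : Fin s, (i : ℕ) = 0 →
      Ideal.span ((X : Fin n → MvPolynomial (Fin n) K) '' T) ∉
        associatedPrimes (MvPolynomial (Fin n) K)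
          (MvPolynomial (Fin n) K ⧸
            (I ^ t + Ideal.span {(X (y i) : MvPolynomial (Fin n) K) ^ α i})))
    (h2 : ∀ i : Fin s, 0 < (i : ℕ) →
      Ideal.span ((X : Fin n → MvPolynomial (Fin n) K) '' T) ∉
        associatedPrimes (MvPolynomial (Fin n) K)
          (MvPolynomial (Fin n) K ⧸
            ((I ^ t).colon (Ideal.span
                {∏ j ∈ Finset.univ.filter (fun j => j < i),
                  (X (y j) : MvPolynomial (Fin n) K) ^ α j}) +
              Ideal.span {(X (y i) : MvPolynomial (Fin n) K) ^ α i})))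
    (ℓ : ℕ) (hℓ : t ≤ ℓ)
    (hprod : (∏ i, (X (y i) : MvPolynomial (Fin n) K) ^ α i) ∈ I ^ ℓ) :
    Ideal.span ((X : Fin n → MvPolynomial (Fin n) K) '' T) ∉
      associatedPrimes (MvPolynomial (Fin n) K)
        (MvPolynomial (Fin n) K ⧸ I ^ t) := by
  intro hA
  refine Ideal.prod_notMem_of_mem_associatedPrimes hA (fun i ↦ X (y i) ^ α i) (fun i ↦ ?_)
    (Ideal.pow_le_pow_right hℓ hprod)
  rcases Nat.eq_zero_or_pos i with h0 | hpos
  · have hIio : Finset.Iio i = ∅ := by ext j; simp [Fin.lt_def, h0]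
    rw [hIio, Finset.prod_empty, Ideal.colon_singleton_one_s5]
    exact h1 i h0
  · rw [← Finset.filter_gt_eq_Iio, ← Ideal.colon_span]
    exact h2 i hpos

/-- With the hypotheses of Statement 4, if
`∏_{i=1}^s y_i^{α_i} ∈ I^ℓ` for some `ℓ ≥ t`, then `p ∉ Ass (R / I^t)`. -/
theorem not_associated_of_steps_and_prod_mem_pow
    {K : Type*} [Field K] {n s : ℕ}
    (I : Ideal (MvPolynomial (Fin n) K)) (hI : IsMonomialIdeal I)
    (T : Set (Fin n)) (t : ℕ) (ht : 1 ≤ t)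
    (α : Fin s → ℕ) (hα : ∀ i, 1 ≤ α i)
    (y : Fin s → Fin n) (hy : Function.Injective y)
    (h1 : ∀ i : Fin s, (i : ℕ) = 0 →
      Ideal.span ((X : Fin n → MvPolynomial (Fin n) K) '' T) ∉
        associatedPrimes (MvPolynomial (Fin n) K)
          (MvPolynomial (Fin n) K ⧸
            (I ^ t + Ideal.span {(X (y i) : MvPolynomial (Fin n) K) ^ α i})))
    (h2 : ∀ i : Fin s, 0 < (i : ℕ) →
      Ideal.span ((X : Fin n → MvPolynomial (Fin n) K) '' T) ∉
        associatedPrimes (MvPolynomial (Fin n) K)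
          (MvPolynomial (Fin n) K ⧸
            ((I ^ t).colon (Ideal.span
                {∏ j ∈ Finset.univ.filter (fun j => j < i),
                  (X (y j) : MvPolynomial (Fin n) K) ^ α j}) +
              Ideal.span {(X (y i) : MvPolynomial (Fin n) K) ^ α i})))
    (ℓ : ℕ) (hℓ : t ≤ ℓ)
    (hprod : (∏ i, (X (y i) : MvPolynomial (Fin n) K) ^ α i) ∈ I ^ ℓ) :
    Ideal.span ((X : Fin n → MvPolynomial (Fin n) K) '' T) ∉
      associatedPrimes (MvPolynomial (Fin n) K)
        (MvPolynomial (Fin n) K ⧸ I ^ t) :=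
  not_associated_of_steps_and_prod_mem_pow_general I T t α y h1 h2 ℓ hℓ hprod
end

section
/- Let n ≥ 2 and let I ⊂ R = K[x_1,…,x_n] be the monomial ideal generated by the monomials x_1^{r_{1,1}}⋯x_n^{r_{1,n}}, …, x_1^{r_{k,1}}⋯x_n^{r_{k,n}}, where r ∈ ℕ^{k×n}. Suppose there exist indices 1 ≤ i ≠ j ≤ n such that r_{1,i} ≥ r_{2,i} ≥ ⋯ ≥ r_{k,i} and r_{1,j} ≥ r_{2,j} ≥ ⋯ ≥ r_{k,j}. Then m = (x_1,…,x_n) ∉ Ass(R/I). -/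
/-!
If `m` were associated to `R/I`, it would be the annihilator of the class of some `f ∉ I`, so
`x_i f` and `x_j f` would lie in `I`. For a monomial `u` of `f`, some generator `x^{r_a}` divides
`x_i u` and some `x^{r_b}` divides `x_j u`. If `a ≤ b`, antitonicity of column `j` gives
`r_{b,j} ≤ r_{a,j} ≤ u_j`, so `x^{r_b}` divides `u`; if `b ≤ a`, column `i` shows likewise that
`x^{r_a}` divides `u`. Hence `f ∈ I`, a contradiction.
-/

open MvPolynomial

theorem Finsupp.le_of_le_single_add_of_apply_le {σ : Type*} {s u : σ →₀ ℕ} {i : σ}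
    (hs : s ≤ single i 1 + u) (hi : s i ≤ u i) : s ≤ u := by
  intro l
  rcases eq_or_ne l i with rfl | hl
  · exact hi
  · simpa [Finsupp.single_apply, hl.symm] using hs l

theorem Finsupp.apply_le_of_le_single_add {σ : Type*} {s u : σ →₀ ℕ} {i j : σ}
    (hs : s ≤ single i 1 + u) (hij : i ≠ j) : s j ≤ u j := by
  simpa [Finsupp.single_apply, hij] using hs j

theorem le_or_le_of_antitone_of_le_single_add {ι σ : Type*} [LinearOrder ι] {s : ι → σ →₀ ℕ}
    {i j : σ} (hij : i ≠ j) (hi : Antitone (s · i)) (hj : Antitone (s · j)) {u : σ →₀ ℕ}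
    {a b : ι} (ha : s a ≤ Finsupp.single i 1 + u) (hb : s b ≤ Finsupp.single j 1 + u) :
    s a ≤ u ∨ s b ≤ u := by
  rcases le_total a b with hab | hba
  · exact .inr <| Finsupp.le_of_le_single_add_of_apply_le hb <|
      (hj hab).trans (Finsupp.apply_le_of_le_single_add ha hij)
  · exact .inl <| Finsupp.le_of_le_single_add_of_apply_le ha <|
      (hi hba).trans (Finsupp.apply_le_of_le_single_add hb hij.symm)

theorem MvPolynomial.mem_ideal_span_monomial_image_of_X_mul_mem {σ R : Type*} [CommSemiring R]
    {S : Set (σ →₀ ℕ)} {i j : σ}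
    (hS : ∀ u, (∃ s ∈ S, s ≤ Finsupp.single i 1 + u) → (∃ s ∈ S, s ≤ Finsupp.single j 1 + u) →
      ∃ s ∈ S, s ≤ u)
    {f : MvPolynomial σ R} (hfi : X i * f ∈ Ideal.span ((monomial · (1 : R)) '' S))
    (hfj : X j * f ∈ Ideal.span ((monomial · (1 : R)) '' S)) :
    f ∈ Ideal.span ((monomial · (1 : R)) '' S) := by
  rw [mem_ideal_span_monomial_image] at hfi hfj ⊢
  intro u hu
  exact hS u (hfi _ (by simpa using hu)) (hfj _ (by simpa using hu))

theorem notMem_associatedPrimes_of_forall_smul_eq_zero {R M : Type*} [CommRing R]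
    [IsNoetherianRing R] [AddCommGroup M] [Module R M] {P : Ideal R}
    (hP : ∀ m : M, (∀ p ∈ P, p • m = 0) → m = 0) : P ∉ associatedPrimes R M := by
  intro hmem
  obtain ⟨hprime, m, rfl⟩ := isAssociatedPrime_iff.mp hmem
  have hm : m = 0 := hP m fun p hp => by
    simpa using (Submodule.mem_colon_singleton.mp hp)
  refine hprime.ne_top ?_
  simp [hm]

theorem maximal_not_associated_of_two_antitone_columns_general
    {K : Type*} [Field K] {n k : ℕ}
    (r : Fin k → Fin n → ℕ)
    (i j : Fin n) (hij : i ≠ j)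
    (hi : ∀ a b : Fin k, a ≤ b → r b i ≤ r a i)
    (hj : ∀ a b : Fin k, a ≤ b → r b j ≤ r a j) :
    Ideal.span (Set.range (X : Fin n → MvPolynomial (Fin n) K)) ∉
      associatedPrimes (MvPolynomial (Fin n) K)
        (MvPolynomial (Fin n) K ⧸
          Ideal.span (Set.range fun a : Fin k =>
            MvPolynomial.monomial (Finsupp.equivFunOnFinite.symm (r a)) (1 : K))) := by
  set s : Fin k → Fin n →₀ ℕ := fun a => Finsupp.equivFunOnFinite.symm (r a)
  set I : Ideal (MvPolynomial (Fin n) K) := Ideal.span (Set.range fun a => monomial (s a) 1)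
  have hI : I = Ideal.span ((monomial · (1 : K)) '' Set.range s) := by
    rw [← Set.range_comp]; rfl
  refine notMem_associatedPrimes_of_forall_smul_eq_zero fun m hm => ?_
  obtain ⟨f, rfl⟩ := Ideal.Quotient.mk_surjective m
  have hX (l : Fin n) : X l * f ∈ I :=
    Ideal.Quotient.eq_zero_iff_mem.mp (hm _ (Ideal.subset_span ⟨l, rfl⟩))
  rw [Ideal.Quotient.eq_zero_iff_mem]
  rw [hI] at hX ⊢
  refine mem_ideal_span_monomial_image_of_X_mul_mem ?_ (hX i) (hX j)
  rintro u ⟨_, ⟨a, rfl⟩, ha⟩ ⟨_, ⟨b, rfl⟩, hb⟩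
  rcases le_or_le_of_antitone_of_le_single_add (s := s) hij hi hj ha hb with h | h
  exacts [⟨_, ⟨a, rfl⟩, h⟩, ⟨_, ⟨b, rfl⟩, h⟩]

/-- Let `n ≥ 2` and let `I ⊂ R = K[x_1,…,x_n]` be the
monomial ideal generated by the monomials `x_1^{r_{a,1}} ⋯ x_n^{r_{a,n}}` for
`a = 1,…,k`.  If there exist indices `i ≠ j` such that the exponent sequences
`r_{1,i} ≥ r_{2,i} ≥ ⋯ ≥ r_{k,i}` and `r_{1,j} ≥ r_{2,j} ≥ ⋯ ≥ r_{k,j}` are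
both non-increasing, then `m = (x_1,…,x_n) ∉ Ass (R / I)`. -/
theorem maximal_not_associated_of_two_antitone_columns
    {K : Type*} [Field K] {n k : ℕ} (hn : 2 ≤ n)
    (r : Fin k → Fin n → ℕ)
    (i j : Fin n) (hij : i ≠ j)
    (hi : ∀ a b : Fin k, a ≤ b → r b i ≤ r a i)
    (hj : ∀ a b : Fin k, a ≤ b → r b j ≤ r a j) :
    Ideal.span (Set.range (X : Fin n → MvPolynomial (Fin n) K)) ∉
      associatedPrimes (MvPolynomial (Fin n) K)
        (MvPolynomial (Fin n) K ⧸
          Ideal.span (Set.range fun a : Fin k =>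
            MvPolynomial.monomial (Finsupp.equivFunOnFinite.symm (r a)) (1 : K))) :=
  maximal_not_associated_of_two_antitone_columns_general r i j hij hi hj
end

section
/- Let I and J be monomial ideals of R = K[x_1,…,x_n], let u be a monomial with supp(u) ∩ (supp(I) ∪ supp(J)) = ∅, and set L = uI + J. Then for every integer t ≥ 1, the colon ideal satisfies (L^t : u^t) = (I + J)^t. -/
open MvPolynomial

/-!
Put `A = supp u` and `S = K[x_i : i ∉ A]`, so that `R = S[x_i : i ∈ A]`. Since `I` and `J` are
generated by monomials avoiding `A`, they are extended from ideals `I₀, J₀` of `S`, and `u` is a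
monomial in the outer variables. Then `L ⊆ (I₀ + J₀)R`, hence `L^t ⊆ (I₀ + J₀)^t R`, and
membership in an extended ideal is a condition on each coefficient. Multiplication by the
monomial `u^t` only shifts coefficients, so `f u^t ∈ L^t` forces `f ∈ (I₀ + J₀)^t R = (I + J)^t`.
Conversely `u^t (I + J)^t = (uI + uJ)^t ⊆ L^t`.
-/
theorem Ideal.span_singleton_pow_mul_sup_pow_le {R : Type*} [CommSemiring R] (u : R)
    (I J : Ideal R) (t : ℕ) :
    Ideal.span {u ^ t} * (I ⊔ J) ^ t ≤ (Ideal.span {u} * I ⊔ J) ^ t := by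
  rw [← Ideal.span_singleton_pow, ← mul_pow, Ideal.mul_sup]
  exact Ideal.pow_right_mono (sup_le_sup_left Ideal.mul_le_right _) t

namespace MvPolynomial

section ExtendedIdeals

variable {R σ : Type*} [CommRing R]

theorem mem_map_C_of_mul_monomial_mem {N : Ideal R} {f : MvPolynomial σ R} {s : σ →₀ ℕ}
    (h : f * monomial s 1 ∈ N.map C) : f ∈ N.map C := by
  refine mem_map_C_iff.2 fun m => ?_
  simpa only [coeff_mul_monomial, mul_one] using mem_map_C_iff.1 h (m + s)

theorem colon_monomial_pow_eq_map_C_sup_pow (I J : Ideal R) (s : σ →₀ ℕ) (t : ℕ) :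
    ((Ideal.span {monomial s (1 : R)} * I.map C ⊔ J.map C) ^ t).colon
        (Ideal.span {monomial s (1 : R) ^ t}) = (I.map C ⊔ J.map C) ^ t := by
  refine le_antisymm (fun f hf => ?_) (fun f hf => ?_)
  · have hL : Ideal.span {monomial s (1 : R)} * I.map C ⊔ J.map C ≤ (I ⊔ J).map C :=
      sup_le (Ideal.mul_le_right.trans (Ideal.map_mono le_sup_left))
        (Ideal.map_mono le_sup_right)
    have hf' : f * monomial (t • s) 1 ∈ ((I ⊔ J) ^ t).map C := by
      rw [← one_pow t, ← monomial_pow, Ideal.map_pow]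
      exact Ideal.pow_right_mono hL t (Ideal.mem_colon_span_singleton.1 hf)
    rw [← Ideal.map_sup, ← Ideal.map_pow]
    exact mem_map_C_of_mul_monomial_mem hf'
  · rw [Ideal.mem_colon_span_singleton, mul_comm f]
    exact Ideal.span_singleton_pow_mul_sup_pow_le (monomial s (1 : R)) (I.map C) (J.map C) t
      (Ideal.mul_mem_mul (Ideal.mem_span_singleton_self _) hf)

end ExtendedIdeals

section SumCompl

variable (R : Type*) {σ : Type*} [CommSemiring R] (p : σ → Prop) [DecidablePred p]

noncomputable def sumComplRingEquiv :
    MvPolynomial σ R ≃+* MvPolynomial {i // p i} (MvPolynomial {i // ¬p i} R) :=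
  ((renameEquiv R (Equiv.sumCompl p)).symm.trans (sumAlgEquiv R _ _)).toRingEquiv

variable {R p}

theorem sumComplRingEquiv_rename_sumCompl (q : MvPolynomial ({i // p i} ⊕ {i // ¬p i}) R) :
    sumComplRingEquiv R p (rename (Equiv.sumCompl p) q) = sumAlgEquiv R _ _ q :=
  congrArg (sumAlgEquiv R _ _) ((renameEquiv R (Equiv.sumCompl p)).symm_apply_apply q)

theorem sumComplRingEquiv_rename_val_pos (q : MvPolynomial {i // p i} R) :
    sumComplRingEquiv R p (rename Subtype.val q) = map C q := by
  rw [show Subtype.val = Equiv.sumCompl p ∘ Sum.inl from rfl, ← rename_rename,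
    sumComplRingEquiv_rename_sumCompl]
  exact DFunLike.congr_fun (sumAlgEquiv_comp_rename_inl R _ _) q

theorem sumComplRingEquiv_rename_val_neg (q : MvPolynomial {i // ¬p i} R) :
    sumComplRingEquiv R p (rename Subtype.val q) = C q := by
  rw [show Subtype.val = Equiv.sumCompl p ∘ Sum.inr from rfl, ← rename_rename,
    sumComplRingEquiv_rename_sumCompl]
  exact DFunLike.congr_fun (sumAlgEquiv_comp_rename_inr R _ _) q

theorem map_sumComplRingEquiv_map_rename (N : Ideal (MvPolynomial {i // ¬p i} R)) :
    (N.map (rename Subtype.val)).map (sumComplRingEquiv R p) = N.map C := by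
  rw [← Ideal.map_coe, ← Ideal.map_coe (rename _), Ideal.map_map]
  congr 1
  refine RingHom.ext fun q => ?_
  rw [RingHom.comp_apply]
  exact sumComplRingEquiv_rename_val_neg q

theorem sumComplRingEquiv_monomial {d : σ →₀ ℕ} (hd : ∀ i ∈ d.support, p i) :
    sumComplRingEquiv R p (monomial d 1) =
      monomial (d.comapDomain Subtype.val Subtype.val_injective.injOn) 1 := by
  have hd' : monomial d (1 : R) =
      rename (Subtype.val : {i // p i} → σ)
        (monomial (d.comapDomain Subtype.val Subtype.val_injective.injOn) 1) := by
    rw [rename_monomial, Finsupp.mapDomain_comapDomain _ Subtype.val_injective]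
    exact fun i hi => ⟨⟨i, hd i hi⟩, rfl⟩
  rw [hd', sumComplRingEquiv_rename_val_pos, map_monomial, map_one]

end SumCompl

end MvPolynomial

theorem MonomialIdealAvoiding.exists_eq_map_rename {K : Type*} [Field K] {n : ℕ}
    {A : Set (Fin n)} {I : Ideal (MvPolynomial (Fin n) K)} (h : MonomialIdealAvoiding A I) :
    ∃ I₀ : Ideal (MvPolynomial {i // i ∉ A} K), I = I₀.map (rename Subtype.val) := by
  obtain ⟨S, hS, rfl⟩ := h
  refine ⟨Ideal.span (rename Subtype.val ⁻¹' ((fun e => monomial e (1 : K)) '' S)), ?_⟩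
  rw [Ideal.map_span, Set.image_preimage_eq_of_subset]
  rintro _ ⟨e, he, rfl⟩
  refine exists_rename_eq_of_vars_subset_range _ _ Subtype.val_injective ?_
  rw [vars_monomial one_ne_zero]
  exact fun i hi => ⟨⟨i, fun hA => Finsupp.mem_support_iff.1 hi (hS e he i hA)⟩, rfl⟩

theorem colon_pow_eq_add_pow_general
    {K : Type*} [Field K] {n : ℕ}
    (I J : Ideal (MvPolynomial (Fin n) K))
    (d : Fin n →₀ ℕ)
    (hdI : MonomialIdealAvoiding (↑d.support) I)
    (hdJ : MonomialIdealAvoiding (↑d.support) J)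
    (L : Ideal (MvPolynomial (Fin n) K))
    (hL : L = Ideal.span {(MvPolynomial.monomial d (1 : K))} * I + J)
    (t : ℕ) :
    (L ^ t).colon (Ideal.span {(MvPolynomial.monomial d (1 : K)) ^ t})
      = (I + J) ^ t := by
  obtain ⟨I₀, rfl⟩ := hdI.exists_eq_map_rename
  obtain ⟨J₀, rfl⟩ := hdJ.exists_eq_map_rename
  subst hL
  set e := sumComplRingEquiv K (· ∈ (d.support : Set (Fin n)))
  have hu : e (monomial d 1) = _ := sumComplRingEquiv_monomial fun i hi => hi
  have hmapL : (Ideal.span {monomial d 1} * I₀.map (rename Subtype.val) ⊔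
      J₀.map (rename Subtype.val)).map e =
        Ideal.span {e (monomial d 1)} * I₀.map C ⊔ J₀.map C := by
    rw [Ideal.map_sup, Ideal.map_mul, Ideal.map_span, Set.image_singleton,
      map_sumComplRingEquiv_map_rename, map_sumComplRingEquiv_map_rename]
  have hmapIJ : (I₀.map (rename Subtype.val) ⊔ J₀.map (rename Subtype.val)).map e =
      I₀.map C ⊔ J₀.map C := by
    rw [Ideal.map_sup, map_sumComplRingEquiv_map_rename, map_sumComplRingEquiv_map_rename]
  simp only [Submodule.add_eq_sup]
  ext f
  rw [Ideal.mem_colon_span_singleton, ← Ideal.apply_mem_of_equiv_iff (f := e),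
    ← Ideal.apply_mem_of_equiv_iff (f := e) (I := (_ ⊔ _) ^ t), map_mul, map_pow,
    Ideal.map_pow, Ideal.map_pow, hmapL, hmapIJ, hu, ← Ideal.mem_colon_span_singleton,
    colon_monomial_pow_eq_map_C_sup_pow]

/-- Let `I, J` be monomial ideals of `R = K[x_1,…,x_n]`,
let `u` be a monomial (with exponent vector `d`) whose support is disjoint
from `supp I ∪ supp J`, and set `L = uI + J`.  Then for every `t ≥ 1`,
`(L^t : u^t) = (I + J)^t`. -/
theorem colon_pow_eq_add_pow
    {K : Type*} [Field K] {n : ℕ}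
    (I J : Ideal (MvPolynomial (Fin n) K))
    (d : Fin n →₀ ℕ)
    (hdI : MonomialIdealAvoiding (↑d.support) I)
    (hdJ : MonomialIdealAvoiding (↑d.support) J)
    (L : Ideal (MvPolynomial (Fin n) K))
    (hL : L = Ideal.span {(MvPolynomial.monomial d (1 : K))} * I + J)
    (t : ℕ) (ht : 1 ≤ t) :
    (L ^ t).colon (Ideal.span {(MvPolynomial.monomial d (1 : K)) ^ t})
      = (I + J) ^ t :=
  colon_pow_eq_add_pow_general I J d hdI hdJ L hL t
end

section
/- Let I and J be monomial ideals of R = K[x_1,…,x_n], let u be a monomial with supp(u) ∩ (supp(I) ∪ supp(J)) = ∅, and set L = uI + J. Then for every integer t ≥ 1, L^t = (L^t : u^t) ∩ (L^t + (u^t)). -/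
open MvPolynomial Pointwise

lemma span_monomial_mul {K : Type*} [Field K] {n : ℕ} (A B : Set (Fin n →₀ ℕ)) :
    Ideal.span ((fun e => MvPolynomial.monomial e (1 : K)) '' A) *
      Ideal.span ((fun e => MvPolynomial.monomial e (1 : K)) '' B)
      = Ideal.span ((fun e => MvPolynomial.monomial e (1 : K)) '' (A + B)) := by
  rw [Ideal.span_mul_span']
  congr 1
  ext x
  simp only [Set.mem_mul, Set.mem_image, Set.mem_add]
  constructor
  · rintro ⟨-, ⟨a, ha, rfl⟩, -, ⟨b, hb, rfl⟩, rfl⟩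
    exact ⟨a + b, ⟨a, ha, b, hb, rfl⟩, by simp [monomial_mul]⟩
  · rintro ⟨-, ⟨a, ha, b, hb, rfl⟩, rfl⟩
    exact ⟨monomial a 1, ⟨a, ha, rfl⟩, monomial b 1, ⟨b, hb, rfl⟩, by simp [monomial_mul]⟩

/-- Let `I, J` be monomial ideals of `R = K[x_1,…,x_n]`,
let `u` be a monomial (with exponent vector `d`) whose support is disjoint
from `supp I ∪ supp J`, and set `L = uI + J`.  Then for every `t ≥ 1`,
`L^t = (L^t : u^t) ∩ (L^t + (u^t))`. -/
theorem pow_eq_colon_inf_add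
    {K : Type*} [Field K] {n : ℕ}
    (I J : Ideal (MvPolynomial (Fin n) K))
    (d : Fin n →₀ ℕ)
    (hdI : MonomialIdealAvoiding (↑d.support) I)
    (hdJ : MonomialIdealAvoiding (↑d.support) J)
    (L : Ideal (MvPolynomial (Fin n) K))
    (hL : L = Ideal.span {(MvPolynomial.monomial d (1 : K))} * I + J)
    (t : ℕ) (ht : 1 ≤ t) :
    L ^ t
      = (L ^ t).colon (Ideal.span {(MvPolynomial.monomial d (1 : K)) ^ t})
        ⊓ (L ^ t + Ideal.span {(MvPolynomial.monomial d (1 : K)) ^ t}) := by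
  obtain ⟨SI, hSI, rfl⟩ := hdI
  obtain ⟨SJ, hSJ, rfl⟩ := hdJ
  -- L itself is a monomial ideal with generators of the shape `k • d + w`, `k ≤ 1`
  set S₁ : Set (Fin n →₀ ℕ) := ((d + ·) '' SI) ∪ SJ with hS₁
  have hL1 : L = Ideal.span ((fun e => MvPolynomial.monomial e (1 : K)) '' S₁) := by
    rw [hL]
    have : Ideal.span {(MvPolynomial.monomial d (1 : K))}
        = Ideal.span ((fun e => MvPolynomial.monomial e (1 : K)) '' {d}) := by
      simp
    rw [this, span_monomial_mul, Set.singleton_add, hS₁, Set.image_union,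
      Ideal.span_union, Ideal.add_eq_sup]
  have hP1 : ∀ σ ∈ S₁, ∃ k ≤ 1, ∃ w : Fin n →₀ ℕ,
      (∀ i ∈ d.support, w i = 0) ∧ σ = k • d + w := by
    rintro σ (⟨e, he, rfl⟩ | hσ)
    · exact ⟨1, le_refl 1, e, fun i hi => hSI e he i hi, by simp⟩
    · exact ⟨0, Nat.zero_le 1, σ, fun i hi => hSJ σ hσ i hi, by simp⟩
  -- L^t is a monomial ideal with generators of the shape `k • d + w`, `k ≤ t`
  have key : ∀ s : ℕ, 1 ≤ s → ∃ S : Set (Fin n →₀ ℕ),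
      (∀ σ ∈ S, ∃ k ≤ s, ∃ w : Fin n →₀ ℕ,
        (∀ i ∈ d.support, w i = 0) ∧ σ = k • d + w) ∧
      L ^ s = Ideal.span ((fun e => MvPolynomial.monomial e (1 : K)) '' S) := by
    intro s hs
    induction s, hs using Nat.le_induction with
    | base => exact ⟨S₁, hP1, by rw [pow_one]; exact hL1⟩
    | succ s hs ih =>
      obtain ⟨S, hSP, hSeq⟩ := ih
      refine ⟨S + S₁, ?_, ?_⟩
      · rintro σ ⟨a, ha, b, hb, rfl⟩
        obtain ⟨k, hk, w, hw, rfl⟩ := hSP a ha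
        obtain ⟨k', hk', w', hw', rfl⟩ := hP1 b hb
        refine ⟨k + k', by omega, w + w', fun i hi => by simp [hw i hi, hw' i hi], ?_⟩
        rw [add_smul]
        abel
      · rw [pow_succ, hSeq, hL1, span_monomial_mul]
  obtain ⟨S, hSP, hSeq⟩ := key t ht
  -- the crucial cancellation property
  have cancel : ∀ c : MvPolynomial (Fin n) K,
      c * (MvPolynomial.monomial d (1 : K)) ^ t * (MvPolynomial.monomial d (1 : K)) ^ t ∈ L ^ t →
      c * (MvPolynomial.monomial d (1 : K)) ^ t ∈ L ^ t := by
    intro c hc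
    rw [hSeq, mem_ideal_span_monomial_image] at hc ⊢
    intro m hm
    rw [MvPolynomial.monomial_pow, one_pow] at hm
    rw [mem_support_iff, coeff_mul_monomial'] at hm
    split_ifs at hm with hle
    · -- m = m' + t • d with coeff m' c ≠ 0
      rw [mul_one] at hm
      set m' := m - t • d with hm'
      have hmeq : m = m' + t • d := (tsub_add_cancel_of_le hle).symm
      have hmem2 : m' + t • d + t • d ∈
          (c * (MvPolynomial.monomial d (1 : K)) ^ t
            * (MvPolynomial.monomial d (1 : K)) ^ t).support := by
        have hassoc : m' + t • d + t • d = m' + (t • d + t • d) := add_assoc _ _ _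
        rw [hassoc, MvPolynomial.monomial_pow, one_pow, mem_support_iff, mul_assoc,
          MvPolynomial.monomial_mul, one_mul, coeff_mul_monomial',
          if_pos le_add_self, add_tsub_cancel_right, mul_one]
        exact hm
      obtain ⟨σ, hσS, hσle⟩ := hc _ hmem2
      refine ⟨σ, hσS, ?_⟩
      obtain ⟨k, hk, w, hw, rfl⟩ := hSP σ hσS
      rw [hmeq]
      intro i
      have h2 := hσle i
      simp only [Finsupp.coe_add, Finsupp.coe_smul, Pi.add_apply, Pi.smul_apply,
        smul_eq_mul] at h2 ⊢
      by_cases hi : i ∈ d.support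
      · have := hw i hi
        calc k * d i + w i = k * d i + 0 := by rw [this]
          _ ≤ m' i + t * d i := by
            have : k * d i ≤ t * d i := Nat.mul_le_mul_right _ hk
            omega
      · have hd0 : d i = 0 := by simpa using hi
        simp only [hd0, Nat.mul_zero, Nat.add_zero, Nat.zero_add] at h2 ⊢
        omega
    · simp at hm
  -- main argument
  refine le_antisymm (le_inf ?_ le_sup_left) ?_
  · intro x hx
    rw [Ideal.mem_colon_span_singleton]
    exact Ideal.mul_mem_right _ _ hx
  · intro f hf
    rw [Submodule.mem_inf] at hf
    obtain ⟨hcolon, hadd⟩ := hf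
    rw [Ideal.mem_colon_span_singleton] at hcolon
    rw [Ideal.add_eq_sup, Submodule.mem_sup] at hadd
    obtain ⟨g, hg, h, hh, rfl⟩ := hadd
    rw [Ideal.mem_span_singleton'] at hh
    obtain ⟨c, rfl⟩ := hh
    refine Ideal.add_mem _ hg (cancel c ?_)
    have : c * (MvPolynomial.monomial d (1 : K)) ^ t * (MvPolynomial.monomial d (1 : K)) ^ t
        = (g + c * (MvPolynomial.monomial d (1 : K)) ^ t)
            * (MvPolynomial.monomial d (1 : K)) ^ t
          - g * (MvPolynomial.monomial d (1 : K)) ^ t := by ring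
    rw [this]
    exact Ideal.sub_mem _ hcolon (Ideal.mul_mem_right _ _ hg)
end

section
/- Let I and J be monomial ideals of R = K[x_1,…,x_n], let u be a monomial with supp(u) ∩ (supp(I) ∪ supp(J)) = ∅, and set L = uI + J. Then for every integer t ≥ 1, (L^t : u^t) + (L^t + (u^t)) = (I + J)^t + (u^t). -/
open MvPolynomial Pointwise

/-! In fact `(L^t : u^t) = (I + J)^t ⊇ L^t`. From `u (I + J) ⊆ L ⊆ I + J` we get
`(I + J)^t ⊆ (L^t : u^t) ⊆ ((I + J)^t : u^t)`, and the last ideal is `(I + J)^t` itself: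
`(I + J)^t` is again generated by monomials avoiding `supp u`, and such a generator divides a
monomial `m u^t` only if it divides `m`. -/

lemma Ideal.span_singleton_mul_add_le_add {R : Type*} [CommSemiring R] (u : R)
    (I J : Ideal R) : Ideal.span {u} * I + J ≤ I + J :=
  add_le_add Ideal.mul_le_right le_rfl

section

variable {K : Type*} [Field K] {n : ℕ}

lemma span_monomial_image_mul (S T : Set (Fin n →₀ ℕ)) :
    Ideal.span ((fun e => monomial e (1 : K)) '' S) *
        Ideal.span ((fun e => monomial e (1 : K)) '' T)
      = Ideal.span ((fun e => monomial e (1 : K)) '' (S + T)) := by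
  rw [Ideal.span_mul_span', ← Set.image2_mul, Set.image2_image_left, Set.image2_image_right,
    ← Set.image2_add, Set.image_image2]
  exact congrArg _ <| Set.image2_congr fun a _ b _ => by rw [monomial_mul, one_mul]

namespace MonomialIdealAvoiding

variable {A : Set (Fin n)} {I J : Ideal (MvPolynomial (Fin n) K)}

lemma top : MonomialIdealAvoiding A (⊤ : Ideal (MvPolynomial (Fin n) K)) :=
  ⟨{0}, by simp, by simp [Ideal.span_singleton_one]⟩

lemma sup (hI : MonomialIdealAvoiding A I) (hJ : MonomialIdealAvoiding A J) :
    MonomialIdealAvoiding A (I ⊔ J) := by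
  obtain ⟨S, hS, rfl⟩ := hI
  obtain ⟨T, hT, rfl⟩ := hJ
  refine ⟨S ∪ T, ?_, by rw [Set.image_union, Ideal.span_union]⟩
  rintro e (he | he)
  exacts [hS e he, hT e he]

lemma mul (hI : MonomialIdealAvoiding A I) (hJ : MonomialIdealAvoiding A J) :
    MonomialIdealAvoiding A (I * J) := by
  obtain ⟨S, hS, rfl⟩ := hI
  obtain ⟨T, hT, rfl⟩ := hJ
  refine ⟨S + T, ?_, span_monomial_image_mul S T⟩
  rintro _ ⟨a, ha, b, hb, rfl⟩ i hi
  simp [hS a ha i hi, hT b hb i hi]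

lemma pow (hI : MonomialIdealAvoiding A I) (t : ℕ) : MonomialIdealAvoiding A (I ^ t) := by
  induction t with
  | zero => simpa using top
  | succ t ih => simpa [pow_succ] using ih.mul hI

lemma mem_of_mul_monomial_mem (hI : MonomialIdealAvoiding A I) {d : Fin n →₀ ℕ}
    (hd : ↑d.support ⊆ A) {f : MvPolynomial (Fin n) K} (hf : f * monomial d 1 ∈ I) :
    f ∈ I := by
  obtain ⟨S, hS, rfl⟩ := hI
  rw [mem_ideal_span_monomial_image] at hf ⊢
  intro m hm
  obtain ⟨s, hs, hsm⟩ := hf (m + d) (by simpa [coeff_mul_monomial] using hm)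
  refine ⟨s, hs, fun i => ?_⟩
  by_cases hi : i ∈ d.support
  · simp [hS s hs i (hd hi)]
  · simpa [Finsupp.notMem_support_iff.mp hi] using hsm i

lemma colon_span_monomial_pow (hI : MonomialIdealAvoiding A I) {d : Fin n →₀ ℕ}
    (hd : ↑d.support ⊆ A) (t : ℕ) :
    I.colon (Ideal.span {monomial d (1 : K) ^ t}) = I := by
  refine le_antisymm (fun f hf => ?_) Ideal.le_colon
  rw [Ideal.mem_colon_span_singleton, monomial_pow, one_pow] at hf
  exact hI.mem_of_mul_monomial_mem ((Finset.coe_subset.mpr Finsupp.support_smul).trans hd) hf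

end MonomialIdealAvoiding

lemma colon_pow_eq_pow_add {I J L : Ideal (MvPolynomial (Fin n) K)} {d : Fin n →₀ ℕ}
    (hdI : MonomialIdealAvoiding (↑d.support) I) (hdJ : MonomialIdealAvoiding (↑d.support) J)
    (hL : L = Ideal.span {monomial d (1 : K)} * I + J) (t : ℕ) :
    (L ^ t).colon (Ideal.span {monomial d (1 : K) ^ t}) = (I + J) ^ t := by
  have hmulle : Ideal.span {monomial d (1 : K)} * (I + J) ≤ L := by
    rw [hL, mul_add]
    exact add_le_add le_rfl Ideal.mul_le_right
  refine le_antisymm ?_ fun f hf => ?_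
  · calc (L ^ t).colon (Ideal.span {monomial d (1 : K) ^ t})
        ≤ ((I + J) ^ t).colon (Ideal.span {monomial d (1 : K) ^ t}) :=
          Submodule.colon_mono
            (pow_le_pow_left' (hL ▸ Ideal.span_singleton_mul_add_le_add _ I J) t) le_rfl
      _ = (I + J) ^ t := ((hdI.sup hdJ).pow t).colon_span_monomial_pow le_rfl t
  · rw [Ideal.mem_colon_span_singleton, mul_comm]
    refine pow_le_pow_left' hmulle t ?_
    rw [mul_pow, Ideal.span_singleton_pow]
    exact Ideal.mul_mem_mul (Ideal.mem_span_singleton_self _) hf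

end

theorem colon_add_add_pow_eq_general
    {K : Type*} [Field K] {n : ℕ}
    (I J : Ideal (MvPolynomial (Fin n) K))
    (d : Fin n →₀ ℕ)
    (hdI : MonomialIdealAvoiding (↑d.support) I)
    (hdJ : MonomialIdealAvoiding (↑d.support) J)
    (L : Ideal (MvPolynomial (Fin n) K))
    (hL : L = Ideal.span {(MvPolynomial.monomial d (1 : K))} * I + J)
    (t : ℕ) :
    (L ^ t).colon (Ideal.span {(MvPolynomial.monomial d (1 : K)) ^ t})
        + (L ^ t + Ideal.span {(MvPolynomial.monomial d (1 : K)) ^ t})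
      = (I + J) ^ t + Ideal.span {(MvPolynomial.monomial d (1 : K)) ^ t} := by
  have hLt : L ^ t ≤ (I + J) ^ t :=
    pow_le_pow_left' (hL ▸ Ideal.span_singleton_mul_add_le_add _ I J) t
  rw [colon_pow_eq_pow_add hdI hdJ hL, ← add_assoc]
  exact congrArg (· + _) (sup_eq_left.mpr hLt)

/-- Let `I, J` be monomial ideals of `R = K[x_1,…,x_n]`,
let `u` be a monomial (with exponent vector `d`) whose support is disjoint
from `supp I ∪ supp J`, and set `L = uI + J`.  Then for every `t ≥ 1`,
`(L^t : u^t) + (L^t + (u^t)) = (I + J)^t + (u^t)`. -/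
theorem colon_add_add_pow_eq
    {K : Type*} [Field K] {n : ℕ}
    (I J : Ideal (MvPolynomial (Fin n) K))
    (d : Fin n →₀ ℕ)
    (hdI : MonomialIdealAvoiding (↑d.support) I)
    (hdJ : MonomialIdealAvoiding (↑d.support) J)
    (L : Ideal (MvPolynomial (Fin n) K))
    (hL : L = Ideal.span {(MvPolynomial.monomial d (1 : K))} * I + J)
    (t : ℕ) (ht : 1 ≤ t) :
    (L ^ t).colon (Ideal.span {(MvPolynomial.monomial d (1 : K)) ^ t})
        + (L ^ t + Ideal.span {(MvPolynomial.monomial d (1 : K)) ^ t})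
      = (I + J) ^ t + Ideal.span {(MvPolynomial.monomial d (1 : K)) ^ t} :=
  colon_add_add_pow_eq_general I J d hdI hdJ L hL t
end

section
/- Let t ≥ 3 be an integer, let R = K[x,y,z] be the polynomial ring in three variables over a field K, and let I = (x^t, x y^{t−2} z, y^{t−1} z). Then for every integer s ≥ 1, (I^s : z) + (y^{t−2}) = (x^{ts}) + (y^{t−2}). -/
/-!
Every generator of `I = (x^t, x y^{t-2} z, y^{t-1} z)` lies in `(x^t) + (y^{t-2})`, hence
`I^s ⊆ (x^{ts}) + (y^{t-2})`. Neither generator of this monomial ideal involves `z`, so `z` is a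
nonzerodivisor modulo it and `(I^s : z) ⊆ (x^{ts}) + (y^{t-2})`.
Conversely `x^{ts} = (x^t)^s ∈ I^s`.
-/

open MvPolynomial

theorem Ideal.sup_pow_le_pow_sup {R : Type*} [CommSemiring R] (I J : Ideal R) (n : ℕ) :
    (I ⊔ J) ^ n ≤ I ^ n ⊔ J := by
  induction n with
  | zero => simp
  | succ n ih =>
    calc (I ⊔ J) ^ (n + 1) = (I ⊔ J) ^ n * (I ⊔ J) := pow_succ _ _
      _ ≤ (I ^ n ⊔ J) * (I ⊔ J) := Ideal.mul_mono_left ih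
      _ ≤ I ^ (n + 1) ⊔ J := by
        rw [Ideal.sup_mul, Ideal.mul_sup, Ideal.mul_sup, ← pow_succ]
        exact sup_le (sup_le le_sup_left (Ideal.mul_le_right.trans le_sup_right))
          (sup_le (Ideal.mul_le_left.trans le_sup_right) (Ideal.mul_le_right.trans le_sup_right))

namespace MvPolynomial

variable {σ R : Type*} [CommSemiring R]

theorem mem_ideal_span_monomial_image_of_mul_X {S : Set (σ →₀ ℕ)} {i : σ}
    (hS : ∀ s ∈ S, s i = 0) {f : MvPolynomial σ R}
    (h : f * X i ∈ Ideal.span ((fun s => monomial s (1 : R)) '' S)) :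
    f ∈ Ideal.span ((fun s => monomial s (1 : R)) '' S) := by
  classical
  rw [mem_ideal_span_monomial_image] at h ⊢
  intro m hm
  obtain ⟨s, hs, hle⟩ := h _ (by rw [support_mul_X]; exact Finset.mem_map_of_mem _ hm)
  refine ⟨s, hs, fun j => ?_⟩
  by_cases hj : j = i
  · simp [hj, hS s hs]
  · simpa [Finsupp.single_apply, Ne.symm hj] using hle j

theorem mem_span_X_pow_sup_of_mul_X {i j k : σ} (hik : i ≠ k) (hjk : j ≠ k) (a b : ℕ)
    {f : MvPolynomial σ R}
    (h : f * X k ∈ Ideal.span {X i ^ a} ⊔ Ideal.span {X j ^ b}) :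
    f ∈ Ideal.span {(X i : MvPolynomial σ R) ^ a} ⊔ Ideal.span {X j ^ b} := by
  have hspan : Ideal.span {(X i : MvPolynomial σ R) ^ a} ⊔ Ideal.span {X j ^ b} =
      Ideal.span ((fun s => monomial s (1 : R)) '' {Finsupp.single i a, Finsupp.single j b}) := by
    rw [Set.image_pair, ← X_pow_eq_monomial, ← X_pow_eq_monomial, Ideal.span_insert]
  rw [hspan] at h ⊢
  refine mem_ideal_span_monomial_image_of_mul_X ?_ h
  rintro s (rfl | rfl | -) <;> simp [hik, hjk]

end MvPolynomial

theorem span_pow_le_span_x_pow_mul_sup_span_y_pow {R : Type*} [CommSemiring R] (x y z : R)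
    (t s : ℕ) :
    Ideal.span {x ^ t, x * y ^ (t - 2) * z, y ^ (t - 1) * z} ^ s ≤
      Ideal.span {x ^ (t * s)} ⊔ Ideal.span {y ^ (t - 2)} := by
  have hI : Ideal.span {x ^ t, x * y ^ (t - 2) * z, y ^ (t - 1) * z} ≤
      Ideal.span {x ^ t} ⊔ Ideal.span {y ^ (t - 2)} := by
    have hy : y ^ (t - 2) ∣ y ^ (t - 1) := pow_dvd_pow y (by omega)
    rw [Ideal.span_le]
    rintro p (rfl | rfl | rfl)
    · exact Ideal.mem_sup_left (Ideal.mem_span_singleton_self _)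
    · exact Ideal.mem_sup_right (Ideal.mem_span_singleton.2 (Dvd.intro_left _ rfl |>.mul_right _))
    · exact Ideal.mem_sup_right (Ideal.mem_span_singleton.2 (hy.mul_right _))
  calc _ ≤ (Ideal.span {x ^ t} ⊔ Ideal.span {y ^ (t - 2)}) ^ s := Ideal.pow_right_mono hI s
    _ ≤ Ideal.span {x ^ t} ^ s ⊔ Ideal.span {y ^ (t - 2)} := Ideal.sup_pow_le_pow_sup _ _ s
    _ = _ := by rw [Ideal.span_singleton_pow, pow_mul]

theorem colon_z_add_y_eq_general
    {K : Type*} [Field K] (t : ℕ) (s : ℕ) :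
    ((Ideal.span {(X 0 : MvPolynomial (Fin 3) K) ^ t,
            (X 0 : MvPolynomial (Fin 3) K) * X 1 ^ (t - 2) * X 2,
            (X 1 : MvPolynomial (Fin 3) K) ^ (t - 1) * X 2}) ^ s).colon
          (Ideal.span {(X 2 : MvPolynomial (Fin 3) K)})
        + Ideal.span {(X 1 : MvPolynomial (Fin 3) K) ^ (t - 2)}
      = Ideal.span {(X 0 : MvPolynomial (Fin 3) K) ^ (t * s)}
        + Ideal.span {(X 1 : MvPolynomial (Fin 3) K) ^ (t - 2)} := by
  rw [Submodule.add_eq_sup, Submodule.add_eq_sup]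
  apply le_antisymm
  · refine sup_le (fun f hf => ?_) le_sup_right
    rw [Ideal.mem_colon_span_singleton] at hf
    exact mem_span_X_pow_sup_of_mul_X (by decide) (by decide) _ _
      (span_pow_le_span_x_pow_mul_sup_span_y_pow _ _ _ t s hf)
  · refine sup_le_sup_right (Ideal.span_singleton_le_iff_mem _ |>.2 (Ideal.le_colon ?_)) _
    rw [pow_mul]
    exact Ideal.pow_mem_pow (Ideal.subset_span (Set.mem_insert _ _)) s

/-- Let `t ≥ 3`, `R = K[x,y,z]` and
`I = (x^t, x y^{t-2} z, y^{t-1} z)`.  Then for every `s ≥ 1`,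
`(I^s : z) + (y^{t-2}) = (x^{ts}) + (y^{t-2})`.
Here `x = X 0`, `y = X 1`, `z = X 2`. -/
theorem colon_z_add_y_eq
    {K : Type*} [Field K] (t : ℕ) (ht : 3 ≤ t) (s : ℕ) (hs : 1 ≤ s) :
    ((Ideal.span {(X 0 : MvPolynomial (Fin 3) K) ^ t,
            (X 0 : MvPolynomial (Fin 3) K) * X 1 ^ (t - 2) * X 2,
            (X 1 : MvPolynomial (Fin 3) K) ^ (t - 1) * X 2}) ^ s).colon
          (Ideal.span {(X 2 : MvPolynomial (Fin 3) K)})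
        + Ideal.span {(X 1 : MvPolynomial (Fin 3) K) ^ (t - 2)}
      = Ideal.span {(X 0 : MvPolynomial (Fin 3) K) ^ (t * s)}
        + Ideal.span {(X 1 : MvPolynomial (Fin 3) K) ^ (t - 2)} :=
  colon_z_add_y_eq_general t s
end

section
/- Let t ≥ 2 be an integer, let R = K[x,y,z] be the polynomial ring in three variables over a field K, and let I = (x^t, x y^{t−2} z, y^{t−1} z). Then for every integer s with 1 ≤ s ≤ t−1, the maximal ideal m = (x,y,z) is not an associated prime of R/I^s, i.e., m ∉ Ass(R/I^s). -/
/-!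
Write `k = t - 2`. The power `I^s` is the monomial ideal spanned by `x^p y^q z^r` with
`p = (k+2)a + b`, `q = kb + (k+1)c`, `r = b + c`, `a + b + c = s`. Since `y, z ∈ m`, it suffices to
show `(I^s : y) ∩ (I^s : z) = I^s`, and for monomial ideals this is a statement about exponents:
if `x^p y^(q+1) z^r` and `x^p y^q z^(r+1)` lie in `I^s`, so does `x^p y^q z^r`. When neither
witness works, the first has `y`-degree exactly `q+1` and the second more `z`'s; as each generator
contributing a `z` also contributes at least `k` `y`'s, the first witness must use `c ≥ k + 1`
copies of `y^(k+1) z`, impossible for `s ≤ t - 1 = k + 1`.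
-/

open MvPolynomial

open scoped Pointwise

theorem not_isAssociatedPrime_of_forall_smul_eq_zero {R M : Type*} [CommRing R]
    [IsNoetherianRing R] [AddCommGroup M] [Module R M] {P : Ideal R}
    (h : ∀ x : M, (∀ r ∈ P, r • x = 0) → x = 0) : ¬IsAssociatedPrime P M := by
  intro hP
  obtain ⟨hprime, x, rfl⟩ := isAssociatedPrime_iff.mp hP
  have hx : x = 0 := h x fun r hr => by
    simpa only [Submodule.mem_colon_singleton, Submodule.mem_bot] using hr
  apply hprime.ne_top
  ext r
  simp [hx, Submodule.mem_colon_singleton]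

theorem Ideal.notMem_associatedPrimes_quotient {R : Type*} [CommRing R] [IsNoetherianRing R]
    {J P : Ideal R} (h : ∀ g : R, (∀ r ∈ P, r * g ∈ J) → g ∈ J) :
    P ∉ associatedPrimes R (R ⧸ J) :=
  not_isAssociatedPrime_of_forall_smul_eq_zero fun x hx => by
    obtain ⟨g, rfl⟩ := Ideal.Quotient.mk_surjective x
    exact Ideal.Quotient.eq_zero_iff_mem.mpr <| h g fun r hr =>
      Ideal.Quotient.eq_zero_iff_mem.mp (hx r hr)

theorem Set.nsmul_triple {M : Type*} [AddCommMonoid M] (u v w : M) (n : ℕ) :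
    n • ({u, v, w} : Set M) = {x | ∃ a b c, a + b + c = n ∧ a • u + b • v + c • w = x} := by
  induction n with
  | zero =>
    ext x
    simp only [zero_nsmul, Set.mem_zero, Set.mem_ofPred_eq, Nat.add_eq_zero_iff]
    constructor
    · rintro rfl; exact ⟨0, 0, 0, by simp⟩
    · rintro ⟨_, _, _, ⟨⟨rfl, rfl⟩, rfl⟩, rfl⟩; simp
  | succ n ih =>
    ext x
    rw [succ_nsmul, ih, Set.mem_add]
    constructor
    · rintro ⟨_, ⟨a, b, c, rfl, rfl⟩, _, rfl | rfl | rfl, rfl⟩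
      · exact ⟨a + 1, b, c, by omega, by module⟩
      · exact ⟨a, b + 1, c, by omega, by module⟩
      · exact ⟨a, b, c + 1, by omega, by module⟩
    · rintro ⟨a, b, c, habc, rfl⟩
      rcases a with _ | a
      · rcases b with _ | b
        · rcases c with _ | c
          · omega
          · exact ⟨_, ⟨0, 0, c, by omega, rfl⟩, w, by simp, by module⟩
        · exact ⟨_, ⟨0, b, c, by omega, rfl⟩, v, by simp, by module⟩
      · exact ⟨_, ⟨a, b, c, by omega, rfl⟩, u, by simp, by module⟩

namespace MvPolynomial

variable {σ R : Type*} [CommSemiring R]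

theorem monomial_mul_monomial_one (s s' : σ →₀ ℕ) :
    monomial (s + s') (1 : R) = monomial s 1 * monomial s' 1 := by
  rw [monomial_mul, one_mul]

theorem span_monomial_image_pow (S : Set (σ →₀ ℕ)) (n : ℕ) :
    Ideal.span ((fun s => monomial s (1 : R)) '' S) ^ n =
      Ideal.span ((fun s => monomial s (1 : R)) '' (n • S)) := by
  induction n with
  | zero => simp [Ideal.one_eq_top, Ideal.span_singleton_one]
  | succ n ih =>
    rw [pow_succ, ih, Ideal.span_mul_span', succ_nsmul, ← Set.image2_add, ← Set.image2_mul,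
      Set.image_image2_distrib (f := (· + ·)) (g := fun s => monomial s (1 : R))
        (f' := (· * ·)) monomial_mul_monomial_one]

theorem mem_span_monomial_of_X_mul_mem {S : Set (σ →₀ ℕ)} {i j : σ} {g : MvPolynomial σ R}
    (hS : ∀ d, (∃ e ∈ S, e ≤ Finsupp.single i 1 + d) → (∃ e ∈ S, e ≤ Finsupp.single j 1 + d) →
      ∃ e ∈ S, e ≤ d)
    (hi : X i * g ∈ Ideal.span ((fun s => monomial s (1 : R)) '' S))
    (hj : X j * g ∈ Ideal.span ((fun s => monomial s (1 : R)) '' S)) :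
    g ∈ Ideal.span ((fun s => monomial s (1 : R)) '' S) := by
  rw [mem_ideal_span_monomial_image] at hi hj ⊢
  intro d hd
  exact hS d (hi _ (by simpa using hd)) (hj _ (by simpa using hd))

end MvPolynomial

namespace MaximalNotAssociated

open Finsupp (single)

/-- Exponents of the generators `x^(k+2)`, `x y^k z`, `y^(k+1) z` of `I`, where `k = t - 2`. -/
noncomputable def generatorExponents (k : ℕ) : Set (Fin 3 →₀ ℕ) :=
  {single 0 (k + 2), single 0 1 + single 1 k + single 2 1, single 1 (k + 1) + single 2 1}

theorem span_generators_eq {K : Type*} [Field K] (k : ℕ) :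
    Ideal.span {(X 0 : MvPolynomial (Fin 3) K) ^ (k + 2), X 0 * X 1 ^ k * X 2,
        X 1 ^ (k + 1) * X 2} =
      Ideal.span ((fun s => monomial s (1 : K)) '' generatorExponents k) := by
  simp only [generatorExponents, Set.image_insert_eq, Set.image_singleton,
    monomial_mul_monomial_one, ← X_pow_eq_monomial, pow_one]

/-- `x^p y^q z^r ∈ I^s`, witnessed by a product of `a + b + c = s` generators. -/
def MonomialMemPow (k s p q r : ℕ) : Prop :=
  ∃ a b c : ℕ, a + b + c = s ∧ a * (k + 2) + b ≤ p ∧ b * k + c * (k + 1) ≤ q ∧ b + c ≤ r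

theorem exists_le_iff_monomialMemPow (k s : ℕ) (d : Fin 3 →₀ ℕ) :
    (∃ e ∈ s • generatorExponents k, e ≤ d) ↔ MonomialMemPow k s (d 0) (d 1) (d 2) := by
  rw [generatorExponents, Set.nsmul_triple]
  constructor
  · rintro ⟨_, ⟨a, b, c, habc, rfl⟩, hle⟩
    exact ⟨a, b, c, habc, by simpa [mul_add] using hle 0,
      by simpa [mul_add] using hle 1, by simpa using hle 2⟩
  · rintro ⟨a, b, c, habc, h0, h1, h2⟩
    refine ⟨_, ⟨a, b, c, habc, rfl⟩, fun i => ?_⟩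
    fin_cases i <;> simp <;> linarith

theorem monomialMemPow_of_succ_of_succ {k s p q r : ℕ} (hs : s ≤ k + 1)
    (hy : MonomialMemPow k s p (q + 1) r) (hz : MonomialMemPow k s p q (r + 1)) :
    MonomialMemPow k s p q r := by
  obtain ⟨a, b, c, habc, hp, hq, hr⟩ := hy
  obtain ⟨a', b', c', habc', hp', hq', hr'⟩ := hz
  by_cases hq₀ : b * k + c * (k + 1) ≤ q
  · exact ⟨a, b, c, habc, hp, hq₀, hr⟩
  by_cases hr₀ : b' + c' ≤ r
  · exact ⟨a', b', c', habc', hp', hq', hr₀⟩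
  exfalso
  have hk : k * (b + c + 1) ≤ k * (b' + c') := Nat.mul_le_mul_left k (by omega)
  linarith

end MaximalNotAssociated

open MaximalNotAssociated in
theorem maximal_not_associated_low_powers_general
    {K : Type*} [Field K] (t : ℕ) (ht : 2 ≤ t)
    (s : ℕ) (hs2 : s ≤ t - 1) :
    Ideal.span {(X 0 : MvPolynomial (Fin 3) K), X 1, X 2} ∉
      associatedPrimes (MvPolynomial (Fin 3) K)
        (MvPolynomial (Fin 3) K ⧸
          (Ideal.span {(X 0 : MvPolynomial (Fin 3) K) ^ t,
              (X 0 : MvPolynomial (Fin 3) K) * X 1 ^ (t - 2) * X 2,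
              (X 1 : MvPolynomial (Fin 3) K) ^ (t - 1) * X 2}) ^ s) := by
  obtain ⟨k, rfl⟩ : ∃ k, t = k + 2 := ⟨t - 2, by omega⟩
  rw [Nat.add_sub_cancel, show k + 2 - 1 = k + 1 from rfl, span_generators_eq,
    span_monomial_image_pow]
  refine Ideal.notMem_associatedPrimes_quotient fun g hg =>
    mem_span_monomial_of_X_mul_mem (i := 1) (j := 2) (fun d hy hz => ?_)
      (hg _ (Ideal.subset_span (by simp))) (hg _ (Ideal.subset_span (by simp)))
  rw [exists_le_iff_monomialMemPow] at hy hz ⊢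
  exact monomialMemPow_of_succ_of_succ hs2 (by simpa [add_comm] using hy)
    (by simpa [add_comm] using hz)

/-- Let `t ≥ 2`, `R = K[x,y,z]` and
`I = (x^t, x y^{t-2} z, y^{t-1} z)`.  Then for every `s` with `1 ≤ s ≤ t-1`,
`m = (x,y,z) ∉ Ass (R / I^s)`.  Here `x = X 0`, `y = X 1`, `z = X 2`. -/
theorem maximal_not_associated_low_powers
    {K : Type*} [Field K] (t : ℕ) (ht : 2 ≤ t)
    (s : ℕ) (hs1 : 1 ≤ s) (hs2 : s ≤ t - 1) :
    Ideal.span {(X 0 : MvPolynomial (Fin 3) K), X 1, X 2} ∉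
      associatedPrimes (MvPolynomial (Fin 3) K)
        (MvPolynomial (Fin 3) K ⧸
          (Ideal.span {(X 0 : MvPolynomial (Fin 3) K) ^ t,
              (X 0 : MvPolynomial (Fin 3) K) * X 1 ^ (t - 2) * X 2,
              (X 1 : MvPolynomial (Fin 3) K) ^ (t - 1) * X 2}) ^ s) :=
  maximal_not_associated_low_powers_general t ht s hs2
end

section
/- Let t ≥ 2 be an integer, let R = K[x,y,z] be the polynomial ring in three variables over a field K, and let I = (x^t, x y^{t−2} z, y^{t−1} z). Then I = (x, y^{t−1}) ∩ (x^t, y^{t−2}) ∩ (x^t, z). -/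
open MvPolynomial

section Aux

variable {K : Type*} [Field K]

lemma X_pow_mono (i : Fin 3) (n : ℕ) :
    (X i : MvPolynomial (Fin 3) K) ^ n = monomial (Finsupp.single i n) 1 :=
  X_pow_eq_monomial

lemma prod3_mono (n : ℕ) :
    (X 0 : MvPolynomial (Fin 3) K) * X 1 ^ n * X 2
      = monomial (Finsupp.single 0 1 + Finsupp.single 1 n + Finsupp.single 2 1) 1 := by
  rw [X_pow_eq_monomial, X, X, monomial_mul, monomial_mul]
  simp

lemma prod2_mono (n : ℕ) :
    (X 1 : MvPolynomial (Fin 3) K) ^ n * X 2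
      = monomial (Finsupp.single 1 n + Finsupp.single 2 1) 1 := by
  rw [X_pow_eq_monomial, X, monomial_mul]
  simp

end Aux

/-- Let `t ≥ 2`, `R = K[x,y,z]` and
`I = (x^t, x y^{t-2} z, y^{t-1} z)`.  Then
`I = (x, y^{t-1}) ∩ (x^t, y^{t-2}) ∩ (x^t, z)`.
Here `x = X 0`, `y = X 1`, `z = X 2`. -/
theorem primary_decomposition_of_I
    {K : Type*} [Field K] (t : ℕ) (ht : 2 ≤ t) :
    Ideal.span {(X 0 : MvPolynomial (Fin 3) K) ^ t,
        (X 0 : MvPolynomial (Fin 3) K) * X 1 ^ (t - 2) * X 2,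
        (X 1 : MvPolynomial (Fin 3) K) ^ (t - 1) * X 2}
      = Ideal.span {(X 0 : MvPolynomial (Fin 3) K),
            (X 1 : MvPolynomial (Fin 3) K) ^ (t - 1)}
        ⊓ Ideal.span {(X 0 : MvPolynomial (Fin 3) K) ^ t,
            (X 1 : MvPolynomial (Fin 3) K) ^ (t - 2)}
        ⊓ Ideal.span {(X 0 : MvPolynomial (Fin 3) K) ^ t,
            (X 2 : MvPolynomial (Fin 3) K)} := by
  have e1 : ({(X 0 : MvPolynomial (Fin 3) K) ^ t,
      (X 0 : MvPolynomial (Fin 3) K) * X 1 ^ (t - 2) * X 2,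
      (X 1 : MvPolynomial (Fin 3) K) ^ (t - 1) * X 2} : Set (MvPolynomial (Fin 3) K))
      = (fun s => monomial s (1 : K)) ''
        ({Finsupp.single 0 t,
          Finsupp.single 0 1 + Finsupp.single 1 (t - 2) + Finsupp.single 2 1,
          Finsupp.single 1 (t - 1) + Finsupp.single 2 1} : Set (Fin 3 →₀ ℕ)) := by
    rw [Set.image_insert_eq, Set.image_insert_eq, Set.image_singleton]
    rw [← X_pow_mono (K := K) 0 t, ← prod3_mono (K := K) (t - 2), ← prod2_mono (K := K) (t - 1)]
  have e2 : ({(X 0 : MvPolynomial (Fin 3) K),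
      (X 1 : MvPolynomial (Fin 3) K) ^ (t - 1)} : Set (MvPolynomial (Fin 3) K))
      = (fun s => monomial s (1 : K)) ''
        ({Finsupp.single 0 1, Finsupp.single 1 (t - 1)} : Set (Fin 3 →₀ ℕ)) := by
    rw [Set.image_insert_eq, Set.image_singleton]
    rw [← X_pow_mono (K := K) 0 1, ← X_pow_mono (K := K) 1 (t - 1), pow_one]
  have e3 : ({(X 0 : MvPolynomial (Fin 3) K) ^ t,
      (X 1 : MvPolynomial (Fin 3) K) ^ (t - 2)} : Set (MvPolynomial (Fin 3) K))
      = (fun s => monomial s (1 : K)) ''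
        ({Finsupp.single 0 t, Finsupp.single 1 (t - 2)} : Set (Fin 3 →₀ ℕ)) := by
    rw [Set.image_insert_eq, Set.image_singleton]
    rw [← X_pow_mono (K := K) 0 t, ← X_pow_mono (K := K) 1 (t - 2)]
  have e4 : ({(X 0 : MvPolynomial (Fin 3) K) ^ t,
      (X 2 : MvPolynomial (Fin 3) K)} : Set (MvPolynomial (Fin 3) K))
      = (fun s => monomial s (1 : K)) ''
        ({Finsupp.single 0 t, Finsupp.single 2 1} : Set (Fin 3 →₀ ℕ)) := by
    rw [Set.image_insert_eq, Set.image_singleton]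
    rw [← X_pow_mono (K := K) 0 t, ← X_pow_mono (K := K) 2 1, pow_one]
  rw [e1, e2, e3, e4]
  ext f
  rw [Submodule.mem_inf, Submodule.mem_inf,
    mem_ideal_span_monomial_image, mem_ideal_span_monomial_image,
    mem_ideal_span_monomial_image, mem_ideal_span_monomial_image]
  constructor
  · intro h
    have key : ∀ d ∈ f.support,
        (t ≤ d 0) ∨ (1 ≤ d 0 ∧ t - 2 ≤ d 1 ∧ 1 ≤ d 2) ∨ (t - 1 ≤ d 1 ∧ 1 ≤ d 2) := by
      intro d hd
      obtain ⟨s, hs, hsd⟩ := h d hd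
      simp only [Set.mem_insert_iff, Set.mem_singleton_iff] at hs
      rw [Finsupp.le_def] at hsd
      rcases hs with rfl | rfl | rfl
      · exact Or.inl (by simpa using hsd 0)
      · exact Or.inr (Or.inl ⟨by simpa using hsd 0, by simpa using hsd 1, by simpa using hsd 2⟩)
      · exact Or.inr (Or.inr ⟨by simpa using hsd 1, by simpa using hsd 2⟩)
    refine ⟨⟨fun d hd => ?_, fun d hd => ?_⟩, fun d hd => ?_⟩
    · rcases key d hd with hx | ⟨ha, hb, hc⟩ | ⟨hb, hc⟩
      · exact ⟨Finsupp.single 0 1, by simp, Finsupp.single_le_iff.2 (by omega)⟩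
      · exact ⟨Finsupp.single 0 1, by simp, Finsupp.single_le_iff.2 ha⟩
      · exact ⟨Finsupp.single 1 (t - 1), by simp, Finsupp.single_le_iff.2 hb⟩
    · rcases key d hd with hx | ⟨ha, hb, hc⟩ | ⟨hb, hc⟩
      · exact ⟨Finsupp.single 0 t, by simp, Finsupp.single_le_iff.2 hx⟩
      · exact ⟨Finsupp.single 1 (t - 2), by simp, Finsupp.single_le_iff.2 hb⟩
      · exact ⟨Finsupp.single 1 (t - 2), by simp, Finsupp.single_le_iff.2 (by omega)⟩
    · rcases key d hd with hx | ⟨ha, hb, hc⟩ | ⟨hb, hc⟩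
      · exact ⟨Finsupp.single 0 t, by simp, Finsupp.single_le_iff.2 hx⟩
      · exact ⟨Finsupp.single 2 1, by simp, Finsupp.single_le_iff.2 hc⟩
      · exact ⟨Finsupp.single 2 1, by simp, Finsupp.single_le_iff.2 hc⟩
  · rintro ⟨⟨h1, h2⟩, h3⟩ d hd
    obtain ⟨s1, hs1, hle1⟩ := h1 d hd
    obtain ⟨s2, hs2, hle2⟩ := h2 d hd
    obtain ⟨s3, hs3, hle3⟩ := h3 d hd
    simp only [Set.mem_insert_iff, Set.mem_singleton_iff] at hs1 hs2 hs3
    rw [Finsupp.le_def] at hle1 hle2 hle3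
    -- extract coordinate inequalities
    by_cases hx : t ≤ d 0
    · refine ⟨Finsupp.single 0 t, by simp, ?_⟩
      rw [Finsupp.le_def]; intro i
      rcases eq_or_ne i 0 with rfl | hi
      · simpa using hx
      · simp [Finsupp.single_apply, hi.symm]
    · -- d 0 < t, so s2 = single 1 (t-2), s3 = single 2 1
      have hb : t - 2 ≤ d 1 := by
        rcases hs2 with rfl | rfl
        · exact absurd (by simpa using hle2 0) hx
        · simpa using hle2 1
      have hc : 1 ≤ d 2 := by
        rcases hs3 with rfl | rfl
        · exact absurd (by simpa using hle3 0) hx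
        · simpa using hle3 2
      rcases hs1 with rfl | rfl
      · -- 1 ≤ d 0 : use x y^{t-2} z
        have ha : 1 ≤ d 0 := by simpa using hle1 0
        refine ⟨Finsupp.single 0 1 + Finsupp.single 1 (t - 2) + Finsupp.single 2 1,
          by simp, ?_⟩
        rw [Finsupp.le_def]; intro i
        fin_cases i <;> simp [Finsupp.single_apply] <;> omega
      · -- t-1 ≤ d 1 : use y^{t-1} z
        have hb' : t - 1 ≤ d 1 := by simpa using hle1 1
        refine ⟨Finsupp.single 1 (t - 1) + Finsupp.single 2 1,
          by simp, ?_⟩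
        rw [Finsupp.le_def]; intro i
        fin_cases i <;> simp [Finsupp.single_apply] <;> omega
end

section
/- Let I and J be monomial ideals of R = K[x_1,…,x_n], let y be a variable of R and α ≥ 1 an integer such that y ∉ supp(J) and I + (y^α) = J + (y^α). Then J ⊆ I. -/
open MvPolynomial

/-- The substitution `X y ↦ 0` sends a monomial to itself if `y` does not
divide it, and to `0` otherwise. -/
lemma aux_aeval_monomial {K : Type*} [Field K] {n : ℕ} (y : Fin n) (e : Fin n →₀ ℕ) :
    (aeval (fun i => if i = y then 0 else X i) : MvPolynomial (Fin n) K →ₐ[K] _)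
      (monomial e (1 : K)) =
    (if e y = 0 then monomial e (1 : K) else 0) := by
  rw [aeval_monomial]
  by_cases hy : e y = 0
  · simp only [hy, if_true, map_one, one_mul]
    rw [monomial_eq, C_1, one_mul]
    refine Finset.prod_congr rfl ?_
    intro i hi
    have : i ≠ y := by rintro rfl; exact (Finsupp.mem_support_iff.mp hi) hy
    simp [this]
  · simp only [hy, if_false]
    rw [Finsupp.prod, Finset.prod_eq_zero (Finsupp.mem_support_iff.mpr hy)]
    · ring
    · simp [zero_pow hy]

/-- Let `I, J` be monomial ideals of `R = K[x_1,…,x_n]`,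
`y` a variable and `α ≥ 1` such that `y ∉ supp J` and
`I + (y^α) = J + (y^α)`.  Then `J ⊆ I`. -/
theorem sub_of_add_pow_var_eq
    {K : Type*} [Field K] {n : ℕ}
    (I J : Ideal (MvPolynomial (Fin n) K))
    (hI : IsMonomialIdeal I)
    (y : Fin n) (α : ℕ) (hα : 1 ≤ α)
    (hJ : MonomialIdealAvoiding {y} J)
    (h : I + Ideal.span {(X y : MvPolynomial (Fin n) K) ^ α}
        = J + Ideal.span {(X y : MvPolynomial (Fin n) K) ^ α}) :
    J ≤ I := by
  obtain ⟨S, hS⟩ := hI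
  obtain ⟨T, hT0, hT⟩ := hJ
  set φ : MvPolynomial (Fin n) K →ₐ[K] MvPolynomial (Fin n) K :=
    aeval (fun i => if i = y then 0 else X i) with hφ
  -- φ maps I into I
  have hφI : ∀ f ∈ I, φ f ∈ I := by
    intro f hf
    have hmem : φ f ∈ Ideal.map (φ : MvPolynomial (Fin n) K →+* MvPolynomial (Fin n) K) I :=
      Ideal.mem_map_of_mem _ hf
    rw [hS, Ideal.map_span] at hmem
    refine Ideal.span_le.mpr ?_ hmem
    rintro _ ⟨_, ⟨e, he, rfl⟩, rfl⟩
    show φ (monomial e (1 : K)) ∈ I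
    rw [hφ, aux_aeval_monomial]
    by_cases hy : e y = 0
    · rw [if_pos hy, hS]; exact Ideal.subset_span ⟨e, he, rfl⟩
    · rw [if_neg hy]; exact I.zero_mem
  -- enough to treat generators of J
  rw [hT]
  refine Ideal.span_le.mpr ?_
  rintro _ ⟨e, he, rfl⟩
  show monomial e (1 : K) ∈ I
  -- the generator lies in I + (y^α)
  have hm : monomial e (1 : K) ∈ I + Ideal.span {(X y : MvPolynomial (Fin n) K) ^ α} := by
    rw [h]
    exact Submodule.mem_sup_left (hT ▸ Ideal.subset_span ⟨e, he, rfl⟩)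
  obtain ⟨f, hf, g, hg, hfg⟩ := Submodule.mem_sup.mp hm
  obtain ⟨c, hc⟩ := Ideal.mem_span_singleton'.mp hg
  -- apply φ
  have hφy : φ ((X y : MvPolynomial (Fin n) K) ^ α) = 0 := by
    rw [hφ, map_pow, aeval_X, if_pos rfl, zero_pow (by omega : α ≠ 0)]
  have hey : e y = 0 := hT0 e he y rfl
  have key : monomial e (1 : K) = φ f := by
    have h1 : φ (monomial e (1 : K)) = monomial e (1 : K) := by
      rw [hφ, aux_aeval_monomial, if_pos hey]
    calc monomial e (1 : K) = φ (f + g) := by rw [hfg, h1]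
    _ = φ f + φ c * φ ((X y : MvPolynomial (Fin n) K) ^ α) := by
        rw [← hc, map_add, map_mul]
    _ = φ f := by rw [hφy, mul_zero, add_zero]
  rw [key]
  exact hφI f hf
end

section
/- Let I and J be monomial ideals of R = K[x_1,…,x_n], let y be a variable of R and α ≥ 1 an integer such that y ∉ supp(J) and I + (y^α) = J + (y^α), and let M be a monomial of R not divisible by y. Then (I : M) + (y^α) = (J : M) + (y^α). -/
open MvPolynomial

/-! For monomial ideals and a monomial `M`, taking the colon by `M` commutes with sums: both
sides are generated by the monomials `m / gcd(m, M)`, `m` running over the generators. Since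
`y ∤ M`, the colon leaves `(y^α)` unchanged, so `(I : M) + (y^α) = (I + (y^α)) : M`, and the
same for `J`. -/

namespace MvPolynomial

variable {σ R : Type*} [CommSemiring R]

lemma support_mul_monomial_one (f : MvPolynomial σ R) (e : σ →₀ ℕ) :
    (f * monomial e (1 : R)).support = f.support.map (addRightEmbedding e) :=
  AddMonoidAlgebra.support_coeff_mul_single f 1 (fun _ => by rw [mul_one]) e

lemma colon_span_monomial_image (S : Set (σ →₀ ℕ)) (e : σ →₀ ℕ) :
    (Ideal.span ((fun s => monomial s (1 : R)) '' S)).colon (Ideal.span {monomial e (1 : R)})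
      = Ideal.span ((fun s => monomial s (1 : R)) '' ((· - e) '' S)) := by
  ext f
  rw [Ideal.mem_colon_span_singleton, mem_ideal_span_monomial_image,
    mem_ideal_span_monomial_image, support_mul_monomial_one, Finset.forall_mem_map]
  refine forall₂_congr fun d _ => ⟨?_, ?_⟩
  · rintro ⟨s, hs, hle⟩
    exact ⟨s - e, Set.mem_image_of_mem _ hs, tsub_le_iff_right.mpr hle⟩
  · rintro ⟨_, ⟨s, hs, rfl⟩, hle⟩
    exact ⟨s, hs, tsub_le_iff_right.mp hle⟩

lemma span_X_pow_colon_monomial {i : σ} {e : σ →₀ ℕ} (he : e i = 0) (k : ℕ) :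
    (Ideal.span {(X i : MvPolynomial σ R) ^ k}).colon (Ideal.span {monomial e (1 : R)})
      = Ideal.span {X i ^ k} := by
  have hsub : Finsupp.single i k - e = Finsupp.single i k := by
    ext j
    by_cases hj : j = i
    · subst hj
      simp [he]
    · simp [Finsupp.single_eq_of_ne hj]
  simpa only [X_pow_eq_monomial, Set.image_singleton, hsub] using
    colon_span_monomial_image (R := R) {Finsupp.single i k} e

end MvPolynomial

lemma isMonomialIdeal_span_X_pow {K : Type*} [Field K] {n : ℕ} (i : Fin n) (k : ℕ) :
    IsMonomialIdeal (Ideal.span {(X i : MvPolynomial (Fin n) K) ^ k}) :=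
  ⟨{Finsupp.single i k}, by rw [Set.image_singleton, X_pow_eq_monomial]⟩

lemma IsMonomialIdeal.sup_colon {K : Type*} [Field K] {n : ℕ}
    {I J : Ideal (MvPolynomial (Fin n) K)} (hI : IsMonomialIdeal I) (hJ : IsMonomialIdeal J)
    (e : Fin n →₀ ℕ) :
    (I ⊔ J).colon (Ideal.span {monomial e (1 : K)})
      = I.colon (Ideal.span {monomial e (1 : K)}) ⊔ J.colon (Ideal.span {monomial e (1 : K)}) := by
  obtain ⟨S, rfl⟩ := hI
  obtain ⟨T, rfl⟩ := hJ
  simp only [← Ideal.span_union, ← Set.image_union, colon_span_monomial_image]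

theorem colon_add_pow_var_eq_general
    {K : Type*} [Field K] {n : ℕ}
    (I J : Ideal (MvPolynomial (Fin n) K))
    (hI : IsMonomialIdeal I) (hJmon : IsMonomialIdeal J)
    (y : Fin n) (α : ℕ)
    (h : I + Ideal.span {(X y : MvPolynomial (Fin n) K) ^ α}
        = J + Ideal.span {(X y : MvPolynomial (Fin n) K) ^ α})
    (e : Fin n →₀ ℕ) (he : e y = 0) :
    I.colon (Ideal.span {(MvPolynomial.monomial e (1 : K))})
        + Ideal.span {(X y : MvPolynomial (Fin n) K) ^ α}
      = J.colon (Ideal.span {(MvPolynomial.monomial e (1 : K))})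
        + Ideal.span {(X y : MvPolynomial (Fin n) K) ^ α} := by
  have hP := isMonomialIdeal_span_X_pow (K := K) y α
  have hPcolon := span_X_pow_colon_monomial (R := K) he α
  calc _ = (I + Ideal.span {X y ^ α}).colon (Ideal.span {monomial e (1 : K)}) := by
        rw [Ideal.add_eq_sup, Ideal.add_eq_sup, IsMonomialIdeal.sup_colon hI hP, hPcolon]
    _ = (J + Ideal.span {X y ^ α}).colon (Ideal.span {monomial e (1 : K)}) := by rw [h]
    _ = _ := by
        rw [Ideal.add_eq_sup, Ideal.add_eq_sup, IsMonomialIdeal.sup_colon hJmon hP, hPcolon]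

/-- Let `I, J` be monomial ideals of `R = K[x_1,…,x_n]`,
`y` a variable and `α ≥ 1` such that `y ∉ supp J` and
`I + (y^α) = J + (y^α)`, and let `M` be a monomial (with exponent vector `e`,
`e y = 0`) not divisible by `y`.  Then
`(I : M) + (y^α) = (J : M) + (y^α)`. -/
theorem colon_add_pow_var_eq
    {K : Type*} [Field K] {n : ℕ}
    (I J : Ideal (MvPolynomial (Fin n) K))
    (hI : IsMonomialIdeal I) (hJmon : IsMonomialIdeal J)
    (y : Fin n) (α : ℕ) (hα : 1 ≤ α)
    (hJ : MonomialIdealAvoiding {y} J)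
    (h : I + Ideal.span {(X y : MvPolynomial (Fin n) K) ^ α}
        = J + Ideal.span {(X y : MvPolynomial (Fin n) K) ^ α})
    (e : Fin n →₀ ℕ) (he : e y = 0) :
    I.colon (Ideal.span {(MvPolynomial.monomial e (1 : K))})
        + Ideal.span {(X y : MvPolynomial (Fin n) K) ^ α}
      = J.colon (Ideal.span {(MvPolynomial.monomial e (1 : K))})
        + Ideal.span {(X y : MvPolynomial (Fin n) K) ^ α} :=
  colon_add_pow_var_eq_general I J hI hJmon y α h e he
end
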